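/- arXiv:2603.16399 — 6 statements merged into one kernel-verified Lean document; each statement's English description precedes it below -/
import Mathlib

section
/- Let (X_i)_{i≥0} be i.i.d. non-negative real random variables and let τ be a stopping time, taking values in ℤ_{≥0}, with respect to the filtration generated by (X_i)_{i≥0}, with E[τ] < ∞. Suppose that E[X_0^q] < ∞ for some q > 1. Then E[ sup_{0 ≤ i ≤ τ} X_i ] ≤ (E[τ + 1])^{1/q} · (E[X_0^q])^{1/q}. -/
open MeasureTheory ProbabilityTheory Finset
open scoped ENNReal

/-!
Pointwise, `max_{i ≤ τ} X_i ≤ (∑_{i ≤ τ} X_i ^ q) ^ (1/q)`. Since `t ↦ t ^ (1/q)` is concave,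
Jensen's inequality moves the expectation inside the power, and Wald's identity gives
`E[∑_{i ≤ τ} X_i ^ q] = E[τ + 1] · E[X_0 ^ q]`: writing the sum as `∑_i 1_{i ≤ τ} X_i ^ q`,
the event `{i ≤ τ}` is determined by `X_0, …, X_{i-1}` and hence independent of `X_i`.
Everything is done with `ℝ≥0∞`-valued integrals, so no integrability has to be checked
along the way.
-/

lemma ENNReal.lintegral_rpow_le_rpow_lintegral {α : Type*} [MeasurableSpace α] {μ : Measure α}
    [IsProbabilityMeasure μ] {f : α → ℝ≥0∞} (hf : AEMeasurable f μ) {p : ℝ} (hp₀ : 0 ≤ p)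
    (hp₁ : p ≤ 1) : ∫⁻ a, f a ^ p ∂μ ≤ (∫⁻ a, f a ∂μ) ^ p := by
  simpa using lintegral_mul_norm_pow_le (g := fun _ => 1) hf aemeasurable_const hp₀
    (sub_nonneg.2 hp₁) (add_sub_cancel p 1)

lemma ENNReal.sup'_le_rpow_sum_rpow {ι : Type*} {s : Finset ι} (hs : s.Nonempty) (f : ι → ℝ≥0∞)
    {p : ℝ} (hp : 0 < p) : s.sup' hs f ≤ (∑ i ∈ s, f i ^ p) ^ p⁻¹ :=
  Finset.sup'_le hs f fun j hj => calc
    f j = (f j ^ p) ^ p⁻¹ := (ENNReal.rpow_rpow_inv hp.ne' _).symm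
    _ ≤ _ := ENNReal.rpow_le_rpow (single_le_sum (f := fun i => f i ^ p) (fun i _ => zero_le) hj)
      (by positivity)

section

variable {Ω β : Type*} [MeasurableSpace Ω] [MeasurableSpace β] {μ : Measure Ω}

lemma ProbabilityTheory.iIndepFun.indepFun_fin_succ {X : ℕ → Ω → β} (hX : iIndepFun X μ)
    (hmeas : ∀ i, Measurable (X i)) (k : ℕ) :
    IndepFun (fun ω (i : Fin (k + 1)) => X i ω) (X (k + 1)) μ :=
  (hX.indepFun_finset (range (k + 1)) {k + 1} (by simp) hmeas).comp
    (φ := fun f (i : Fin (k + 1)) => f ⟨i, mem_range.2 i.2⟩)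
    (ψ := fun f => f ⟨k + 1, mem_singleton_self _⟩)
    (measurable_pi_lambda _ fun _ => measurable_pi_apply _) (measurable_pi_apply _)

lemma ProbabilityTheory.IndepFun.lintegral_indicator_comp {γ : Type*} [MeasurableSpace γ]
    {Y : Ω → β} {Z : Ω → γ} (h : IndepFun Y Z μ) (hY : Measurable Y) (hZ : Measurable Z)
    {A : Set Ω} (hA : MeasurableSet[MeasurableSpace.comap Y inferInstance] A) {φ : γ → ℝ≥0∞}
    (hφ : Measurable φ) :
    ∫⁻ ω, A.indicator (fun ω => φ (Z ω)) ω ∂μ = μ A * ∫⁻ ω, φ (Z ω) ∂μ := by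
  calc ∫⁻ ω, A.indicator (fun ω => φ (Z ω)) ω ∂μ
      = ∫⁻ ω, A.indicator (fun _ => 1) ω * φ (Z ω) ∂μ := by
        congr 1 with ω
        by_cases hω : ω ∈ A <;> simp [hω]
    _ = (∫⁻ ω, A.indicator (fun _ => 1) ω ∂μ) * ∫⁻ ω, φ (Z ω) ∂μ :=
        lintegral_mul_eq_lintegral_mul_lintegral_of_independent_measurableSpace
          hY.comap_le hZ.comap_le ((IndepFun_iff_Indep Y Z μ).1 h)
          (measurable_const.indicator hA) (hφ.comp (Measurable.of_comap_le le_rfl))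
    _ = μ A * ∫⁻ ω, φ (Z ω) ∂μ := by rw [lintegral_indicator_const (hY.comap_le A hA), one_mul]

lemma Measurable.index_apply {ι γ : Type*} [Countable ι] [MeasurableSpace ι]
    [MeasurableSingletonClass ι] [MeasurableSpace γ] {τ : Ω → ι} (hτ : Measurable τ)
    {F : ι → Ω → γ} (hF : ∀ n, Measurable (F n)) : Measurable fun ω => F (τ ω) ω :=
  (measurable_from_prod_countable_left (f := fun p : Ω × ι => F p.2 p.1) hF).comp
    (measurable_id.prodMk hτ)

lemma lintegral_sum_range_succ_eq_tsum {τ : Ω → ℕ} (hτ : Measurable τ) {f : ℕ → Ω → ℝ≥0∞}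
    (hf : ∀ i, Measurable (f i)) :
    ∫⁻ ω, ∑ i ∈ range (τ ω + 1), f i ω ∂μ = ∑' i, ∫⁻ ω, {ω | i ≤ τ ω}.indicator (f i) ω ∂μ := by
  rw [← lintegral_tsum fun i =>
    ((hf i).indicator (measurableSet_le measurable_const hτ)).aemeasurable]
  congr 1 with ω
  rw [tsum_eq_sum (s := range (τ ω + 1)) fun i hi => by simp_all]
  exact sum_congr rfl fun i hi => by simp_all

def IsNaturalStoppingTime (X : ℕ → Ω → β) (τ : Ω → ℕ) : Prop :=
  ∀ k : ℕ, MeasurableSet[MeasurableSpace.comap (fun ω (i : Fin (k + 1)) => X i ω) inferInstance]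
    {ω | τ ω ≤ k}

section

variable {X : ℕ → Ω → β} {τ : Ω → ℕ}

lemma IsNaturalStoppingTime.measurable (hmeas : ∀ i, Measurable (X i))
    (hτ : IsNaturalStoppingTime X τ) : Measurable τ :=
  measurable_of_Iic fun k =>
    (measurable_pi_lambda (fun ω (i : Fin (k + 1)) => X i ω) fun i => hmeas i).comap_le _ (hτ k)

lemma IsNaturalStoppingTime.lintegral_indicator_le (hmeas : ∀ i, Measurable (X i))
    (hindep : iIndepFun X μ) (hident : ∀ i, IdentDistrib (X i) (X 0) μ μ)
    (hτ : IsNaturalStoppingTime X τ) {φ : β → ℝ≥0∞} (hφ : Measurable φ) (i : ℕ) :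
    ∫⁻ ω, {ω | i ≤ τ ω}.indicator (fun ω => φ (X i ω)) ω ∂μ
      = μ {ω | i ≤ τ ω} * ∫⁻ ω, φ (X 0 ω) ∂μ := by
  have h_mean : ∫⁻ ω, φ (X i ω) ∂μ = ∫⁻ ω, φ (X 0 ω) ∂μ := ((hident i).comp hφ).lintegral_eq
  rw [← h_mean]
  cases i with
  | zero =>
    have := hindep.isProbabilityMeasure
    simp
  | succ k =>
    -- `{k + 1 ≤ τ} = {τ ≤ k}ᶜ` lies in `σ(X 0, …, X k)`, which is independent of `X (k + 1)`.
    have hA : {ω | k + 1 ≤ τ ω} = {ω | τ ω ≤ k}ᶜ := by ext; simp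
    rw [hA]
    exact (hindep.indepFun_fin_succ hmeas k).lintegral_indicator_comp
      (measurable_pi_lambda _ fun i => hmeas i) (hmeas _) (hτ k).compl hφ

theorem IsNaturalStoppingTime.lintegral_sum_range_succ (hmeas : ∀ i, Measurable (X i))
    (hindep : iIndepFun X μ) (hident : ∀ i, IdentDistrib (X i) (X 0) μ μ)
    (hτ : IsNaturalStoppingTime X τ) {φ : β → ℝ≥0∞} (hφ : Measurable φ) :
    ∫⁻ ω, ∑ i ∈ range (τ ω + 1), φ (X i ω) ∂μ
      = (∫⁻ ω, (τ ω + 1 : ℝ≥0∞) ∂μ) * ∫⁻ ω, φ (X 0 ω) ∂μ := by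
  have hτm := hτ.measurable hmeas
  have hs : ∀ i, MeasurableSet {ω | i ≤ τ ω} := fun i => measurableSet_le measurable_const hτm
  have h_count : ∫⁻ ω, (τ ω + 1 : ℝ≥0∞) ∂μ = ∑' i, μ {ω | i ≤ τ ω} := by
    simpa [hs, lintegral_indicator_const] using
      lintegral_sum_range_succ_eq_tsum (μ := μ) hτm (f := fun _ _ => 1) fun _ => measurable_const
  rw [lintegral_sum_range_succ_eq_tsum hτm (f := fun i ω => φ (X i ω)) fun i => hφ.comp (hmeas i),
    h_count, ← ENNReal.tsum_mul_right]
  exact tsum_congr (hτ.lintegral_indicator_le hmeas hindep hident hφ)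

end

theorem IsNaturalStoppingTime.lintegral_ofReal_sup'_le [IsProbabilityMeasure μ] {X : ℕ → Ω → ℝ}
    (hmeas : ∀ i, Measurable (X i)) (hindep : iIndepFun X μ)
    (hident : ∀ i, IdentDistrib (X i) (X 0) μ μ) {τ : Ω → ℕ} (hτ : IsNaturalStoppingTime X τ)
    {q : ℝ} (hq : 1 ≤ q) :
    ∫⁻ ω, ENNReal.ofReal ((range (τ ω + 1)).sup' nonempty_range_add_one fun i => X i ω) ∂μ
      ≤ (∫⁻ ω, (τ ω + 1 : ℝ≥0∞) ∂μ) ^ q⁻¹ * (∫⁻ ω, ENNReal.ofReal (X 0 ω) ^ q ∂μ) ^ q⁻¹ :=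
  calc _ ≤ ∫⁻ ω, (∑ i ∈ range (τ ω + 1), ENNReal.ofReal (X i ω) ^ q) ^ q⁻¹ ∂μ :=
        lintegral_mono fun ω => by
          rw [Finset.apply_sup'_eq_sup'_comp _ _ ENNReal.ofReal_max]
          exact ENNReal.sup'_le_rpow_sum_rpow _ _ (by linarith)
    _ ≤ (∫⁻ ω, ∑ i ∈ range (τ ω + 1), ENNReal.ofReal (X i ω) ^ q ∂μ) ^ q⁻¹ :=
        ENNReal.lintegral_rpow_le_rpow_lintegral
          ((hτ.measurable hmeas).index_apply
            (F := fun n ω => ∑ i ∈ range (n + 1), ENNReal.ofReal (X i ω) ^ q)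
            fun n => by fun_prop).aemeasurable
          (by positivity) (inv_le_one_of_one_le₀ hq)
    _ = _ := by
        rw [hτ.lintegral_sum_range_succ hmeas hindep hident (φ := fun x => ENNReal.ofReal x ^ q)
          (by fun_prop),
          ENNReal.mul_rpow_of_nonneg _ _ (by positivity)]

end

/-- For i.i.d. non-negative `(X_i)` and a stopping time `τ` (for the
filtration `F_k = σ(X_0, …, X_k)`) with finite mean, and `E[X_0^q] < ∞` for some `q > 1`:
`E[sup_{0≤i≤τ} X_i] ≤ E[τ+1]^{1/q} · E[X_0^q]^{1/q}`. -/
theorem stmt_4 {Ω : Type*} [MeasurableSpace Ω] (μ : Measure Ω) [IsProbabilityMeasure μ]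
    (X : ℕ → Ω → ℝ) (hmeas : ∀ i, Measurable (X i))
    (hnonneg : ∀ i ω, 0 ≤ X i ω)
    (hindep : iIndepFun X μ)
    (hident : ∀ i, IdentDistrib (X i) (X 0) μ μ)
    (τ : Ω → ℕ)
    (hstop : ∀ k : ℕ,
      MeasurableSet[MeasurableSpace.comap (fun ω (i : Fin (k + 1)) => X i ω) inferInstance]
        {ω | τ ω ≤ k})
    (hτ_int : Integrable (fun ω => (τ ω : ℝ)) μ)
    (q : ℝ) (hq : 1 < q)
    (hXq : Integrable (fun ω => X 0 ω ^ q) μ) :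
    (∫ ω, (Finset.range (τ ω + 1)).sup' Finset.nonempty_range_add_one (fun i => X i ω) ∂μ)
      ≤ (∫ ω, ((τ ω : ℝ) + 1) ∂μ) ^ (1 / q) * (∫ ω, X 0 ω ^ q ∂μ) ^ (1 / q) := by
  have hτ : IsNaturalStoppingTime X τ := hstop
  have h_time : ∫⁻ ω, (τ ω + 1 : ℝ≥0∞) ∂μ = ENNReal.ofReal (∫ ω, ((τ ω : ℝ) + 1) ∂μ) := by
    have h_int : Integrable (fun ω => (τ ω : ℝ) + 1) μ := hτ_int.add (integrable_const 1)
    rw [ofReal_integral_eq_lintegral_ofReal h_int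
      (ae_of_all _ fun ω => (by positivity : (0 : ℝ) ≤ τ ω + 1))]
    congr 1 with ω
    simp [ENNReal.ofReal_add]
  have h_moment : ∫⁻ ω, ENNReal.ofReal (X 0 ω) ^ q ∂μ = ENNReal.ofReal (∫ ω, X 0 ω ^ q ∂μ) := by
    rw [ofReal_integral_eq_lintegral_ofReal hXq
      (ae_of_all _ fun ω => Real.rpow_nonneg (hnonneg 0 ω) q)]
    congr 1 with ω
    exact ENNReal.ofReal_rpow_of_nonneg (hnonneg 0 ω) (by linarith)
  have h_bound := hτ.lintegral_ofReal_sup'_le hmeas hindep hident hq.le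
  rw [h_time, h_moment] at h_bound
  rw [integral_eq_lintegral_of_nonneg_ae
    (ae_of_all _ fun ω => (hnonneg 0 ω).trans (le_sup' (fun i => X i ω) (by simp)))
    ((hτ.measurable hmeas).index_apply
      (F := fun n ω => (range (n + 1)).sup' nonempty_range_add_one fun i => X i ω)
      fun n => measurable_range_sup'' fun i _ => hmeas i).aestronglyMeasurable]
  have h_time_nonneg : 0 ≤ ∫ ω, ((τ ω : ℝ) + 1) ∂μ := integral_nonneg fun ω => by positivity
  have h_moment_nonneg : 0 ≤ ∫ ω, X 0 ω ^ q ∂μ :=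
    integral_nonneg fun ω => Real.rpow_nonneg (hnonneg 0 ω) q
  refine ENNReal.toReal_le_of_le_ofReal (by positivity) (h_bound.trans_eq ?_)
  rw [one_div, ENNReal.ofReal_mul (by positivity),
    ENNReal.ofReal_rpow_of_nonneg h_time_nonneg (by positivity),
    ENNReal.ofReal_rpow_of_nonneg h_moment_nonneg (by positivity)]
end

section
/- Let (ξ_i)_{i≥1} be i.i.d. positive random variables with E[e^{θ ξ₁}] < ∞ for all θ > 0. For n ∈ ℕ set ξⁿ_k = ξ_k/n, τⁿ_k = ∑_{i=1}^k ξⁿ_i, τⁿ_0 = 0, Nⁿ_s = sup{k : τⁿ_k ≤ s}, and πⁿ(s) = τⁿ_{Nⁿ_s}. Fix T > 0 and p > 0 and define N_p = ∫₀ᵀ (s − πⁿ(s))^p ds. Then E[N_p] ≤ (1/n^p) · ((E[Nⁿ_T] + 2)/n) · E[ξ₁^{p+1}]. -/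
open MeasureTheory ProbabilityTheory

open scoped ENNReal

/-!
Between consecutive sampling times `τ k ≤ s < τ (k + 1)` the integrand is `(s - τ k) ^ p`, so
pathwise `∫₀ᵀ (s - πⁿ(s)) ^ p ds ≤ ∑_{k ≤ Nⁿ_T} (τ (k + 1) - τ k) ^ (p + 1)
= n^{-(p+1)} ∑_k 1{τ k ≤ T} ξ_k ^ (p + 1)` (indices start at `0`, so `τ (k + 1) - τ k = ξ_k / n`).
The event `{τ k ≤ T}` only involves `ξ_0, …, ξ_{k-1}`, hence is independent of `ξ_k`, and the
expectation of the sum is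
`∑_k P(τ k ≤ T) · E[ξ^{p+1}] / n^{p+1} = (E[Nⁿ_T] + 1) E[ξ^{p+1}] / n^{p+1}`.
The Chernoff bound `P(τ k ≤ T) ≤ e^{nT} E[e^{-ξ}]^k`, with `E[e^{-ξ}] < 1`, makes `∑_k P(τ k ≤ T)`
finite; in particular `Nⁿ_T < ∞` a.s., which matters since `sSup` of an unbounded set of naturals
is `0`.
-/

namespace StrictMono

variable {t : ℕ → ℝ} {T : ℝ}

theorem setOf_le_eq_Iic (ht : StrictMono t) {m : ℕ} (hm : t m ≤ T) (hm' : T < t (m + 1)) :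
    {k | t k ≤ T} = Set.Iic m := by
  ext k
  exact ⟨fun hk => Nat.lt_succ_iff.mp (ht.lt_iff_lt.mp (hk.trans_lt hm')),
    fun hk => (ht.monotone hk).trans hm⟩

theorem sSup_setOf_le_eq (ht : StrictMono t) {m : ℕ} (hm : t m ≤ T) (hm' : T < t (m + 1)) :
    sSup {k | t k ≤ T} = m := by
  rw [ht.setOf_le_eq_Iic hm hm', csSup_Iic]

theorem mem_Ico_sSup_setOf_le (ht : StrictMono t) (h0 : t 0 ≤ T) (hT : ∃ k, T < t k) :
    T ∈ Set.Ico (t (sSup {k | t k ≤ T})) (t (sSup {k | t k ≤ T} + 1)) := by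
  obtain ⟨k, hk⟩ := hT
  have hbdd : BddAbove {k | t k ≤ T} :=
    ⟨k, fun j hj => (ht.lt_iff_lt.mp (lt_of_le_of_lt hj hk)).le⟩
  exact ⟨Nat.sSup_mem ⟨0, h0⟩ hbdd,
    lt_of_not_ge fun h => (le_csSup hbdd h).not_gt (Nat.lt_succ_self _)⟩

theorem tsum_indicator_setOf_le (ht : StrictMono t) (h0 : t 0 ≤ T) (hT : ∃ k, T < t k)
    (f : ℕ → ENNReal) :
    ∑' k, {k | t k ≤ T}.indicator f k = ∑ k ∈ Finset.range (sSup {k | t k ≤ T} + 1), f k := by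
  obtain ⟨hm, hm'⟩ := ht.mem_Ico_sSup_setOf_le h0 hT
  generalize sSup {k | t k ≤ T} = m at hm hm' ⊢
  rw [ht.setOf_le_eq_Iic hm hm', Nat.range_succ_eq_Iic, ← Finset.coe_Iic, ← _root_.tsum_subtype]
  exact Finset.tsum_subtype _ f

theorem rpow_sub_sSup_eqOn (ht : StrictMono t) (p : ℝ) (k : ℕ) :
    Set.EqOn (fun s => (s - t (sSup {j | t j ≤ s})) ^ p) (fun s => (s - t k) ^ p)
      (Set.Ioo (t k) (t (k + 1))) :=
  fun _ hs => by simp only [ht.sSup_setOf_le_eq hs.1.le hs.2]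

theorem intervalIntegrable_rpow_sub_sSup (ht : StrictMono t) {p : ℝ} (hp : 0 ≤ p) {k : ℕ} {b : ℝ}
    (hb : t k ≤ b) (hb' : b ≤ t (k + 1)) :
    IntervalIntegrable (fun s => (s - t (sSup {j | t j ≤ s})) ^ p) volume (t k) b := by
  refine (ContinuousOn.intervalIntegrable ?_).congr_uIoo
    (((ht.rpow_sub_sSup_eqOn p k).mono ?_).symm)
  · exact (continuousOn_id.sub continuousOn_const).rpow_const fun _ _ => Or.inr hp
  · rw [Set.uIoo_of_le hb]
    exact Set.Ioo_subset_Ioo_right hb'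

theorem intervalIntegral_rpow_sub_sSup_le (ht : StrictMono t) {p : ℝ} (hp : 0 ≤ p) {k : ℕ}
    {b : ℝ} (hb : t k ≤ b) (hb' : b ≤ t (k + 1)) :
    ∫ s in t k..b, (s - t (sSup {j | t j ≤ s})) ^ p ≤ (t (k + 1) - t k) ^ (p + 1) := by
  rw [intervalIntegral.integral_congr_Ioo_of_le hb
      ((ht.rpow_sub_sSup_eqOn p k).mono (Set.Ioo_subset_Ioo_right hb')),
    intervalIntegral.integral_comp_sub_right (· ^ p), sub_self,
    integral_rpow (Or.inl (by linarith)), Real.zero_rpow (by positivity), sub_zero]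
  have hbk : 0 ≤ b - t k := sub_nonneg.mpr hb
  calc (b - t k) ^ (p + 1) / (p + 1) ≤ (b - t k) ^ (p + 1) :=
        div_le_self (by positivity) (by linarith)
    _ ≤ (t (k + 1) - t k) ^ (p + 1) := by gcongr

theorem intervalIntegral_rpow_sub_sSup_le_sum (ht : StrictMono t) (ht0 : t 0 = 0) {p : ℝ}
    (hp : 0 ≤ p) {m : ℕ} (hm : t m ≤ T) (hm' : T < t (m + 1)) :
    ∫ s in (0 : ℝ)..T, (s - t (sSup {j | t j ≤ s})) ^ p
      ≤ ∑ k ∈ Finset.range (m + 1), (t (k + 1) - t k) ^ (p + 1) := by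
  set a : ℕ → ℝ := fun k => min (t k) T
  have ha : ∀ k ≤ m, a k = t k := fun k hk => min_eq_left ((ht.monotone hk).trans hm)
  have ha_mem : ∀ k < m + 1, t k ≤ a (k + 1) ∧ a (k + 1) ≤ t (k + 1) := fun k hk =>
    ⟨le_min (ht.monotone k.le_succ) ((ht.monotone (Nat.lt_succ_iff.mp hk)).trans hm),
      min_le_left _ _⟩
  have hsum := intervalIntegral.sum_integral_adjacent_intervals (μ := volume)
    (f := fun s => (s - t (sSup {j | t j ≤ s})) ^ p) (a := a) (n := m + 1) fun k hk => by
      rw [ha k (Nat.lt_succ_iff.mp hk)]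
      exact ht.intervalIntegrable_rpow_sub_sSup hp (ha_mem k hk).1 (ha_mem k hk).2
  rw [ha 0 (Nat.zero_le m), ht0, show a (m + 1) = T from min_eq_right hm'.le] at hsum
  rw [← hsum]
  refine Finset.sum_le_sum fun k hk => ?_
  have hk := Finset.mem_range.mp hk
  rw [ha k (Nat.lt_succ_iff.mp hk)]
  exact ht.intervalIntegral_rpow_sub_sSup_le hp (ha_mem k hk).1 (ha_mem k hk).2

theorem enorm_intervalIntegral_rpow_sub_sSup_le_tsum (ht : StrictMono t) (ht0 : t 0 = 0)
    {p : ℝ} (hp : 0 ≤ p) (hT : 0 ≤ T) (hT' : ∃ k, T < t k) :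
    ‖∫ s in (0 : ℝ)..T, (s - t (sSup {j | t j ≤ s})) ^ p‖ₑ
      ≤ ∑' k, {k | t k ≤ T}.indicator
          (fun k => ENNReal.ofReal ((t (k + 1) - t k) ^ (p + 1))) k := by
  have h0 : t 0 ≤ T := ht0 ▸ hT
  obtain ⟨hm, hm'⟩ := ht.mem_Ico_sSup_setOf_le h0 hT'
  obtain ⟨k, hk⟩ := hT'
  have hnonneg : 0 ≤ ∫ s in (0 : ℝ)..T, (s - t (sSup {j | t j ≤ s})) ^ p :=
    intervalIntegral.integral_nonneg hT fun s hs => Real.rpow_nonneg (sub_nonneg.mpr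
      (ht.mem_Ico_sSup_setOf_le (ht0 ▸ hs.1) ⟨k, hs.2.trans_lt hk⟩).1) _
  rw [Real.enorm_of_nonneg hnonneg, ht.tsum_indicator_setOf_le h0 ⟨k, hk⟩,
    ← ENNReal.ofReal_sum_of_nonneg fun k _ =>
      Real.rpow_nonneg (sub_nonneg.mpr (ht.monotone k.le_succ)) _]
  exact ENNReal.ofReal_le_ofReal (ht.intervalIntegral_rpow_sub_sSup_le_sum ht0 hp hm hm')

end StrictMono

section RandomSampling

variable {Ω : Type*}

section SamplingTimes

variable {ξ : ℕ → Ω → ℝ} {n : ℕ}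

noncomputable def samplingTime (ξ : ℕ → Ω → ℝ) (n : ℕ) (k : ℕ) (ω : Ω) : ℝ :=
  (∑ i ∈ Finset.range k, ξ i ω) / n

@[simp]
lemma samplingTime_zero (ω : Ω) : samplingTime ξ n 0 ω = 0 := by
  simp [samplingTime]

lemma samplingTime_succ_sub (k : ℕ) (ω : Ω) :
    samplingTime ξ n (k + 1) ω - samplingTime ξ n k ω = ξ k ω / n := by
  rw [samplingTime, samplingTime, Finset.sum_range_succ, add_div, add_sub_cancel_left]

lemma strictMono_samplingTime (hpos : ∀ i ω, 0 < ξ i ω) (hn : 0 < n) (ω : Ω) :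
    StrictMono (samplingTime ξ n · ω) :=
  strictMono_nat_of_lt_succ fun k => sub_pos.mp
    (samplingTime_succ_sub k ω ▸ div_pos (hpos k ω) (Nat.cast_pos.mpr hn))

lemma samplingTime_le_iff (hn : 0 < n) {k : ℕ} {ω : Ω} {T : ℝ} :
    samplingTime ξ n k ω ≤ T ↔ ∑ i ∈ Finset.range k, ξ i ω ≤ n * T :=
  div_le_iff₀' (Nat.cast_pos.mpr hn)

end SamplingTimes

variable [MeasurableSpace Ω] {μ : Measure Ω}

lemma integrable_exp_mul_of_nonpos [IsFiniteMeasure μ] {X : Ω → ℝ} (hX : AEMeasurable X μ)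
    (hX0 : ∀ ω, 0 ≤ X ω) {t : ℝ} (ht : t ≤ 0) : Integrable (fun ω => Real.exp (t * X ω)) μ :=
  Integrable.of_bound (hX.const_mul t).exp.aestronglyMeasurable 1 (ae_of_all _ fun ω => by
    rw [Real.norm_of_nonneg (Real.exp_pos _).le, Real.exp_le_one_iff]
    exact mul_nonpos_of_nonpos_of_nonneg ht (hX0 ω))

lemma mgf_lt_one_of_neg [IsProbabilityMeasure μ] {X : Ω → ℝ} (hX : AEMeasurable X μ)
    (hX0 : ∀ ω, 0 < X ω) {t : ℝ} (ht : t < 0) : mgf X μ t < 1 := by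
  have hint := integrable_exp_mul_of_nonpos hX (fun ω => (hX0 ω).le) ht.le
  have hlt : ∀ ω, Real.exp (t * X ω) < 1 := fun ω =>
    Real.exp_lt_one_iff.mpr (mul_neg_of_neg_of_pos ht (hX0 ω))
  have hpos : 0 < ∫ ω, (1 - Real.exp (t * X ω)) ∂μ := by
    rw [integral_pos_iff_support_of_nonneg (fun ω => (sub_pos.mpr (hlt ω)).le)
      ((integrable_const 1).sub hint), Function.support_eq_univ fun ω => (sub_pos.mpr (hlt ω)).ne']
    simp
  rw [integral_sub (integrable_const 1) hint, integral_const, probReal_univ, one_smul] at hpos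
  rw [mgf]
  linarith

section IIDSums

variable {ξ : ℕ → Ω → ℝ}

lemma measure_sum_range_le_le_exp_mul_mgf_pow (hmeas : ∀ i, Measurable (ξ i))
    (hindep : iIndepFun ξ μ) (hident : ∀ i, IdentDistrib (ξ i) (ξ 0) μ μ) {t : ℝ} (ht : t ≤ 0)
    (hint : Integrable (fun ω => Real.exp (t * ξ 0 ω)) μ) (c : ℝ) (k : ℕ) :
    μ.real {ω | ∑ i ∈ Finset.range k, ξ i ω ≤ c} ≤ Real.exp (-t * c) * mgf (ξ 0) μ t ^ k := by
  have := hindep.isProbabilityMeasure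
  have hint_sum := hindep.integrable_exp_mul_sum hmeas (s := Finset.range k) fun i _ =>
    ((hident i).comp (measurable_const_mul t).exp).integrable_iff.mpr hint
  have h := measure_le_le_exp_mul_mgf c ht hint_sum
  rw [hindep.mgf_sum hmeas,
    Finset.prod_congr rfl fun i _ => mgf_congr_of_identDistrib _ _ (hident i) t,
    Finset.prod_const, Finset.card_range] at h
  simpa only [Finset.sum_apply] using h

lemma tsum_measure_sum_range_le_ne_top (hmeas : ∀ i, Measurable (ξ i))
    (hpos : ∀ i ω, 0 < ξ i ω) (hindep : iIndepFun ξ μ)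
    (hident : ∀ i, IdentDistrib (ξ i) (ξ 0) μ μ) (c : ℝ) :
    ∑' k, μ {ω | ∑ i ∈ Finset.range k, ξ i ω ≤ c} ≠ ∞ := by
  have := hindep.isProbabilityMeasure
  have hr : mgf (ξ 0) μ (-1) < 1 := mgf_lt_one_of_neg (hmeas 0).aemeasurable (hpos 0) (by norm_num)
  have hbound : ∀ k, μ {ω | ∑ i ∈ Finset.range k, ξ i ω ≤ c}
      ≤ ENNReal.ofReal (Real.exp c) * ENNReal.ofReal (mgf (ξ 0) μ (-1)) ^ k := fun k => by
    rw [← ENNReal.ofReal_pow mgf_nonneg, ← ENNReal.ofReal_mul (Real.exp_pos c).le,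
      ← ofReal_measureReal]
    refine ENNReal.ofReal_le_ofReal ?_
    simpa using measure_sum_range_le_le_exp_mul_mgf_pow hmeas hindep hident (t := -1) (by norm_num)
      (integrable_exp_mul_of_nonpos (hmeas 0).aemeasurable (fun ω => (hpos 0 ω).le) (by norm_num))
      c k
  refine ne_top_of_le_ne_top ?_ (ENNReal.tsum_le_tsum hbound)
  rw [ENNReal.tsum_mul_left, ENNReal.tsum_geometric]
  exact ENNReal.mul_ne_top ENNReal.ofReal_ne_top
    (ENNReal.inv_ne_top.mpr (tsub_pos_iff_lt.mpr (ENNReal.ofReal_lt_one.mpr hr)).ne')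

lemma lintegral_indicator_sum_range_le_eq_mul (hmeas : ∀ i, Measurable (ξ i))
    (hindep : iIndepFun ξ μ) (hident : ∀ i, IdentDistrib (ξ i) (ξ 0) μ μ) {g : ℝ → ℝ≥0∞}
    (hg : Measurable g) (c : ℝ) (k : ℕ) :
    ∫⁻ ω, {ω | ∑ i ∈ Finset.range k, ξ i ω ≤ c}.indicator (fun ω => g (ξ k ω)) ω ∂μ
      = μ {ω | ∑ i ∈ Finset.range k, ξ i ω ≤ c} * ∫⁻ ω, g (ξ 0 ω) ∂μ := by
  have hS : Measurable (∑ i ∈ Finset.range k, ξ i) := by fun_prop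
  have hI : Measurable ((Set.Iic c).indicator (1 : ℝ → ℝ≥0∞)) :=
    measurable_one.indicator measurableSet_Iic
  have h := lintegral_mul_eq_lintegral_mul_lintegral_of_indepFun'' (hI.comp hS).aemeasurable
    (hg.comp (hmeas k)).aemeasurable ((hindep.indepFun_sum_range_succ hmeas k).comp hI hg)
  convert h using 1
  · congr 1 with ω
    simp [Set.indicator_apply, Finset.sum_apply]
  · rw [((hident k).comp hg).lintegral_eq,
      ← lintegral_indicator_one (measurableSet_le (by fun_prop) measurable_const)]
    congr 2 with ω
    simp [Set.indicator_apply, Finset.sum_apply]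

lemma lintegral_tsum_indicator_sum_range_le_eq_mul (hmeas : ∀ i, Measurable (ξ i))
    (hindep : iIndepFun ξ μ) (hident : ∀ i, IdentDistrib (ξ i) (ξ 0) μ μ) {g : ℝ → ℝ≥0∞}
    (hg : Measurable g) (c : ℝ) :
    ∫⁻ ω, ∑' k, {ω | ∑ i ∈ Finset.range k, ξ i ω ≤ c}.indicator (fun ω => g (ξ k ω)) ω ∂μ
      = (∑' k, μ {ω | ∑ i ∈ Finset.range k, ξ i ω ≤ c}) * ∫⁻ ω, g (ξ 0 ω) ∂μ := by
  rw [lintegral_tsum fun k => ?_, ← ENNReal.tsum_mul_right]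
  · exact tsum_congr (lintegral_indicator_sum_range_le_eq_mul hmeas hindep hident hg c)
  · exact ((hg.comp (hmeas k)).indicator
      (measurableSet_le (by fun_prop) measurable_const)).aemeasurable

end IIDSums

section Counting

variable {t : ℕ → Ω → ℝ} {T : ℝ}

lemma ae_exists_lt_of_tsum_ne_top (hfin : ∑' k, μ {ω | t k ω ≤ T} ≠ ∞) :
    ∀ᵐ ω ∂μ, ∃ k, T < t k ω :=
  (ae_eventually_notMem hfin).mono fun _ h =>
    let ⟨k, hk⟩ := h.exists
    ⟨k, not_le.mp hk⟩

lemma integral_sSup_setOf_le_add_one [IsProbabilityMeasure μ] (ht : ∀ ω, StrictMono (t · ω))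
    (ht0 : ∀ ω, t 0 ω ≤ T) (htm : ∀ k, Measurable (t k)) (hfin : ∑' k, μ {ω | t k ω ≤ T} ≠ ∞) :
    ∫ ω, ((sSup {k : ℕ | t k ω ≤ T} : ℕ) : ℝ) ∂μ + 1 = (∑' k, μ {ω | t k ω ≤ T}).toReal := by
  set C : Ω → ℝ≥0∞ := fun ω => ∑' k, {ω | t k ω ≤ T}.indicator 1 ω
  have hA : ∀ k, MeasurableSet {ω | t k ω ≤ T} := fun k =>
    measurableSet_le (htm k) measurable_const
  have hC : Measurable C := Measurable.tsum fun k => measurable_one.indicator (hA k)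
  have hlC : ∫⁻ ω, C ω ∂μ = ∑' k, μ {ω | t k ω ≤ T} := by
    rw [lintegral_tsum fun k => (measurable_one.indicator (hA k)).aemeasurable]
    exact tsum_congr fun k => lintegral_indicator_one (hA k)
  have hcount : ∀ᵐ ω ∂μ, ((sSup {k : ℕ | t k ω ≤ T} : ℕ) : ℝ) = (C ω).toReal - 1 := by
    filter_upwards [ae_exists_lt_of_tsum_ne_top hfin] with ω hω
    have h := StrictMono.tsum_indicator_setOf_le (ht ω) (ht0 ω) hω 1
    simp only [C, Set.indicator_apply, Set.mem_ofPred_eq, Pi.one_apply, Finset.sum_const,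
      Finset.card_range, nsmul_eq_mul, mul_one] at h ⊢
    rw [h, ENNReal.toReal_natCast, Nat.cast_succ, add_sub_cancel_right]
  have hCint : Integrable (fun ω => (C ω).toReal) μ :=
    integrable_toReal_of_lintegral_ne_top hC.aemeasurable (hlC ▸ hfin)
  rw [integral_congr_ae hcount, integral_sub hCint (integrable_const 1), integral_const,
    probReal_univ, one_smul, integral_toReal hC.aemeasurable (ae_lt_top hC (hlC ▸ hfin)), hlC]
  ring

end Counting

section SamplingError

variable {ξ : ℕ → Ω → ℝ} {n : ℕ}

lemma measurable_samplingTime (hmeas : ∀ i, Measurable (ξ i)) (k : ℕ) :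
    Measurable (samplingTime ξ n k) := by
  unfold samplingTime
  fun_prop

lemma tsum_measure_samplingTime_le_ne_top
    (hmeas : ∀ i, Measurable (ξ i)) (hpos : ∀ i ω, 0 < ξ i ω) (hindep : iIndepFun ξ μ)
    (hident : ∀ i, IdentDistrib (ξ i) (ξ 0) μ μ) (hn : 0 < n) (T : ℝ) :
    ∑' k, μ {ω | samplingTime ξ n k ω ≤ T} ≠ ∞ := by
  simpa only [samplingTime_le_iff hn] using
    tsum_measure_sum_range_le_ne_top hmeas hpos hindep hident (n * T)

lemma lintegral_enorm_integral_rpow_sub_samplingTime_le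
    (hmeas : ∀ i, Measurable (ξ i)) (hpos : ∀ i ω, 0 < ξ i ω) (hindep : iIndepFun ξ μ)
    (hident : ∀ i, IdentDistrib (ξ i) (ξ 0) μ μ) (hn : 0 < n) {T : ℝ} (hT : 0 ≤ T) {p : ℝ}
    (hp : 0 ≤ p) (hM : Integrable (fun ω => ξ 0 ω ^ (p + 1)) μ) :
    ∫⁻ ω, ‖∫ s in (0 : ℝ)..T,
        (s - samplingTime ξ n (sSup {k | samplingTime ξ n k ω ≤ s}) ω) ^ p‖ₑ ∂μ
      ≤ (∑' k, μ {ω | samplingTime ξ n k ω ≤ T})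
          * ENNReal.ofReal ((∫ ω, ξ 0 ω ^ (p + 1) ∂μ) / n ^ (p + 1)) := by
  have hn' : (0 : ℝ) < n := Nat.cast_pos.mpr hn
  set g : ℝ → ℝ≥0∞ := fun x => ENNReal.ofReal ((x / n) ^ (p + 1))
  have hpath : ∀ᵐ ω ∂μ, ‖∫ s in (0 : ℝ)..T,
        (s - samplingTime ξ n (sSup {k | samplingTime ξ n k ω ≤ s}) ω) ^ p‖ₑ
      ≤ ∑' k, {ω | ∑ i ∈ Finset.range k, ξ i ω ≤ n * T}.indicator (fun ω => g (ξ k ω)) ω := by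
    filter_upwards [ae_exists_lt_of_tsum_ne_top
      (tsum_measure_samplingTime_le_ne_top hmeas hpos hindep hident hn T)] with ω hω
    simpa only [samplingTime_succ_sub, Set.indicator_apply, Set.mem_ofPred_eq,
      samplingTime_le_iff hn] using
      (strictMono_samplingTime hpos hn ω).enorm_intervalIntegral_rpow_sub_sSup_le_tsum
        (samplingTime_zero ω) hp hT hω
  have hg : ∫⁻ ω, g (ξ 0 ω) ∂μ = ENNReal.ofReal ((∫ ω, ξ 0 ω ^ (p + 1) ∂μ) / n ^ (p + 1)) := by
    simp_rw [g, Real.div_rpow (hpos 0 _).le hn'.le]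
    rw [← ofReal_integral_eq_lintegral_ofReal (hM.div_const _)
      (ae_of_all _ fun ω => div_nonneg (Real.rpow_nonneg (hpos 0 ω).le _) (by positivity)),
      integral_div]
  refine (lintegral_mono_ae hpath).trans_eq ?_
  rw [lintegral_tsum_indicator_sum_range_le_eq_mul hmeas hindep hident (by fun_prop) (n * T), hg]
  simp only [samplingTime_le_iff hn]

end SamplingError

end RandomSampling

/-- With `πⁿ(s) = τⁿ_{Nⁿ_s}` the last random sampling time before `s`:
`E[∫₀ᵀ (s − πⁿ(s))^p ds] ≤ (1/nᵖ)·((E[Nⁿ_T]+2)/n)·E[ξ₁^{p+1}]`. -/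
theorem stmt_6 {Ω : Type*} [MeasurableSpace Ω] (μ : Measure Ω) [IsProbabilityMeasure μ]
    (ξ : ℕ → Ω → ℝ) (hmeas : ∀ i, Measurable (ξ i))
    (hpos : ∀ i ω, 0 < ξ i ω)
    (hindep : iIndepFun ξ μ)
    (hident : ∀ i, IdentDistrib (ξ i) (ξ 0) μ μ)
    (hmgf : ∀ θ : ℝ, 0 < θ → Integrable (fun ω => Real.exp (θ * ξ 0 ω)) μ)
    (n : ℕ) (hn : 0 < n) (T : ℝ) (hT : 0 < T) (p : ℝ) (hp : 0 < p)
    (τ : ℕ → Ω → ℝ) (hτ : ∀ k ω, τ k ω = (∑ i ∈ Finset.range k, ξ i ω) / n)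
    (N : ℝ → Ω → ℕ) (hN : ∀ s ω, N s ω = sSup {k : ℕ | τ k ω ≤ s})
    (π : ℝ → Ω → ℝ) (hπ : ∀ s ω, π s ω = τ (N s ω) ω) :
    (∫ ω, (∫ s in (0 : ℝ)..T, (s - π s ω) ^ p) ∂μ)
      ≤ (1 / (n : ℝ) ^ p) * (((∫ ω, (N T ω : ℝ) ∂μ) + 2) / n)
          * ∫ ω, ξ 0 ω ^ (p + 1) ∂μ := by
  obtain rfl : τ = samplingTime ξ n := funext₂ hτ
  have hn' : (0 : ℝ) < n := Nat.cast_pos.mpr hn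
  have hfin := tsum_measure_samplingTime_le_ne_top hmeas hpos hindep hident hn T
  have hEN : ∫ ω, (N T ω : ℝ) ∂μ + 1 = (∑' k, μ {ω | samplingTime ξ n k ω ≤ T}).toReal := by
    simpa only [hN] using integral_sSup_setOf_le_add_one (strictMono_samplingTime hpos hn)
      (fun ω => (samplingTime_zero ω).trans_le hT.le) (measurable_samplingTime hmeas) hfin
  have hM : Integrable (fun ω => ξ 0 ω ^ (p + 1)) μ :=
    integrable_rpow_of_integrable_exp_mul one_ne_zero (hmgf 1 one_pos)
      (integrable_exp_mul_of_nonpos (hmeas 0).aemeasurable (fun ω => (hpos 0 ω).le) (by norm_num))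
      (by linarith)
  have hM0 : 0 ≤ ∫ ω, ξ 0 ω ^ (p + 1) ∂μ :=
    integral_nonneg fun ω => Real.rpow_nonneg (hpos 0 ω).le _
  have hL : ∫⁻ ω, ‖∫ s in (0 : ℝ)..T, (s - π s ω) ^ p‖ₑ ∂μ
      ≤ (∑' k, μ {ω | samplingTime ξ n k ω ≤ T})
          * ENNReal.ofReal ((∫ ω, ξ 0 ω ^ (p + 1) ∂μ) / n ^ (p + 1)) := by
    simpa only [hπ, hN] using lintegral_enorm_integral_rpow_sub_samplingTime_le hmeas hpos hindep
      hident hn hT.le hp.le hM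
  calc _ ≤ ((∑' k, μ {ω | samplingTime ξ n k ω ≤ T})
          * ENNReal.ofReal ((∫ ω, ξ 0 ω ^ (p + 1) ∂μ) / n ^ (p + 1))).toReal :=
        (Real.le_norm_self _).trans ((toReal_enorm _).symm.trans_le
          (ENNReal.toReal_mono (ENNReal.mul_ne_top hfin ENNReal.ofReal_ne_top)
            ((enorm_integral_le_lintegral_enorm _).trans hL)))
    _ = (∫ ω, (N T ω : ℝ) ∂μ + 1) * ((∫ ω, ξ 0 ω ^ (p + 1) ∂μ) / (n ^ p * n)) := by
        rw [ENNReal.toReal_mul, ← hEN, ENNReal.toReal_ofReal (by positivity),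
          Real.rpow_add_one hn'.ne']
    _ ≤ (∫ ω, (N T ω : ℝ) ∂μ + 2) * ((∫ ω, ξ 0 ω ^ (p + 1) ∂μ) / (n ^ p * n)) := by
        gcongr
        norm_num
    _ = _ := by ring
end

section
/- Let A ∈ ℝ^{d×d}, B ∈ ℝ^{d×m}, K ∈ ℝ^{m×d}, x₀ ∈ ℝ^d, T > 0 and p ≥ 1. Let π : [0,T] → [0,T] be measurable with π(s) ≤ s for all s. Let x : [0,T] → ℝ^d be the solution of x(t) = x₀ + ∫₀ᵗ (A − BK) x(s) ds, and let xⁿ : [0,T] → ℝ^d be a continuous solution of xⁿ(t) = x₀ + ∫₀ᵗ (A xⁿ(s) − BK xⁿ(π(s))) ds. Then there exists a constant C depending only on A, B, K, T, p and ‖x₀‖ such that sup_{0 ≤ t ≤ T} ‖xⁿ(t) − x(t)‖^p ≤ C · ∫₀ᵀ (s − π(s))^p ds. -/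
open MeasureTheory Set Filter
open scoped Nat Topology

/-!
With `L = ‖A‖ + ‖BK‖`, a Grönwall argument bounds the sample-and-hold trajectory by
`X = ‖x₀‖ e^{LT}` uniformly in `π`; the delayed argument `xⁿ(π s)` is handled by running the
Picard iteration of Grönwall's inequality through monotone majorants. Hence `xⁿ` is
`LX`-Lipschitz and `‖xⁿ(s) - xⁿ(π s)‖ ≤ LX (s - π s)`. The error `e = xⁿ - x` solves
`e' = (A - BK) e + BK (xⁿ - xⁿ ∘ π)`, so Grönwall again gives `‖e‖ ≤ C ∫₀ᵀ (s - π s) ds`,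
and Jensen's inequality `(∫₀ᵀ g)^p ≤ T^{p-1} ∫₀ᵀ g^p` turns this into the claim.
-/

/-- The `n`-th Picard iterate of `u ↦ a + L ∫₀ᵗ u`, started from the constant `M`. -/
noncomputable def gronwallIterate (a L M : ℝ) (n : ℕ) (t : ℝ) : ℝ :=
  a * ∑ k ∈ Finset.range n, (L * t) ^ k / k ! + M * ((L * t) ^ n / n !)

lemma mul_integral_pow_div_factorial (L t : ℝ) (k : ℕ) :
    L * ∫ s in (0 : ℝ)..t, (L * s) ^ k / k ! = (L * t) ^ (k + 1) / (k + 1)! := by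
  simp_rw [mul_pow, intervalIntegral.integral_div, intervalIntegral.integral_const_mul,
    integral_pow, Nat.factorial_succ]
  push_cast
  field_simp
  ring

lemma add_mul_integral_gronwallIterate (a L M : ℝ) (n : ℕ) (t : ℝ) :
    a + L * ∫ s in (0 : ℝ)..t, gronwallIterate a L M n s = gronwallIterate a L M (n + 1) t := by
  have hint : ∀ k : ℕ, IntervalIntegrable (fun s : ℝ => (L * s) ^ k / k !) volume 0 t :=
    fun k => (by fun_prop : Continuous fun s : ℝ => (L * s) ^ k / k !).intervalIntegrable _ _
  have hsum : IntervalIntegrable (fun s : ℝ => ∑ k ∈ Finset.range n, (L * s) ^ k / k !)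
      volume 0 t :=
    (by fun_prop : Continuous fun s : ℝ => ∑ k ∈ Finset.range n, (L * s) ^ k / k !)
      |>.intervalIntegrable _ _
  simp only [gronwallIterate]
  rw [intervalIntegral.integral_add (hsum.const_mul a) ((hint n).const_mul M),
    intervalIntegral.integral_const_mul, intervalIntegral.integral_const_mul,
    intervalIntegral.integral_finsetSum fun k _ => hint k, mul_add, mul_left_comm L a,
    Finset.mul_sum, mul_left_comm L M]
  simp only [mul_integral_pow_div_factorial, Finset.sum_range_succ' _ n, pow_zero,
    Nat.factorial_zero, Nat.cast_one, div_one]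
  ring

lemma monotoneOn_gronwallIterate {a L M : ℝ} (ha : 0 ≤ a) (hL : 0 ≤ L) (hM : 0 ≤ M) (n : ℕ) :
    MonotoneOn (gronwallIterate a L M n) (Ici 0) := by
  intro s (hs : 0 ≤ s) t ht hst
  have hLs : 0 ≤ L * s := mul_nonneg hL hs
  unfold gronwallIterate
  gcongr

lemma tendsto_gronwallIterate (a L M t : ℝ) :
    Tendsto (fun n => gronwallIterate a L M n t) atTop (𝓝 (a * Real.exp (L * t))) := by
  have hexp := (NormedSpace.expSeries_div_hasSum_exp (L * t)).tendsto_sum_nat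
  rw [← Real.exp_eq_exp_ℝ] at hexp
  simpa [gronwallIterate] using (hexp.const_mul a).add
    ((FloorSemiring.tendsto_pow_div_factorial_atTop (L * t)).const_mul M)

/-- Grönwall's inequality in a form where the hypothesis only has to hold for monotone majorants
`b` of `u`; this is what lets delayed arguments `u (π s)` with `π s ≤ s` be absorbed. -/
theorem le_mul_exp_of_le_add_integral_majorant {u : ℝ → ℝ} {a L T : ℝ} (ha : 0 ≤ a) (hL : 0 ≤ L)
    (hu : BddAbove (u '' Icc 0 T))
    (H : ∀ b : ℝ → ℝ, MonotoneOn b (Icc 0 T) → (∀ s ∈ Icc 0 T, u s ≤ b s) →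
      ∀ t ∈ Icc 0 T, u t ≤ a + L * ∫ s in (0 : ℝ)..t, b s) :
    ∀ t ∈ Icc 0 T, u t ≤ a * Real.exp (L * t) := by
  obtain ⟨M, hM⟩ := hu
  have hiter : ∀ n, ∀ t ∈ Icc 0 T, u t ≤ gronwallIterate a L (max M 0) n t := by
    intro n
    induction n with
    | zero =>
      intro t ht
      simpa [gronwallIterate] using (hM (mem_image_of_mem u ht)).trans (le_max_left M 0)
    | succ n ih =>
      intro t ht
      rw [← add_mul_integral_gronwallIterate]
      refine H _ ((monotoneOn_gronwallIterate ha hL (le_max_right M 0) n).mono ?_) ih t ht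
      exact fun s hs => hs.1
  intro t ht
  exact ge_of_tendsto' (tendsto_gronwallIterate a L (max M 0) t) fun n => hiter n t ht

theorem MeasureTheory.IntegrableOn.intervalIntegrable_of_mem {E : Type*} [NormedAddCommGroup E]
    {f : ℝ → E} {a b t : ℝ} (hf : IntegrableOn f (Icc a b)) (ht : t ∈ Icc a b) :
    IntervalIntegrable f volume a t :=
  (intervalIntegrable_iff_integrableOn_Icc_of_le ht.1).2 (hf.mono_set (Icc_subset_Icc_right ht.2))

theorem ContinuousOn.integrableOn_comp_of_mapsTo {E : Type*} [NormedAddCommGroup E] {f : ℝ → E}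
    {π : ℝ → ℝ} {a b : ℝ} (hf : ContinuousOn f (Icc a b)) (hπ : Measurable π)
    (hmaps : MapsTo π (Icc a b) (Icc a b)) : IntegrableOn (fun s => f (π s)) (Icc a b) := by
  rcases lt_or_ge b a with hba | hab
  · simp [Icc_eq_empty_of_lt hba]
  obtain ⟨C, hC⟩ := isCompact_Icc.exists_bound_of_continuousOn hf
  set g := IccExtend hab ((Icc a b).domRestrict f)
  have hg : Continuous g := hf.domRestrict.Icc_extend'
  have hgC : ∀ r, ‖g r‖ ≤ C := fun r => hC _ (projIcc a b hab r).2
  refine (Measure.integrableOn_of_bounded measure_Icc_lt_top.ne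
    (hg.comp_aestronglyMeasurable hπ.aestronglyMeasurable)
    (Eventually.of_forall fun s => hgC (π s))).congr_fun
    (fun s hs => IccExtend_of_mem hab _ (hmaps hs)) measurableSet_Icc

section IntegralEquation

variable {E : Type*} [NormedAddCommGroup E] [NormedSpace ℝ E] {z F : ℝ → E} {z₀ : E} {T : ℝ}

theorem norm_le_of_eq_add_integral_of_norm_le_delay {π γ : ℝ → ℝ} {α β : ℝ} (hα : 0 ≤ α)
    (hβ : 0 ≤ β) (hz : ContinuousOn z (Icc 0 T)) (hF : IntegrableOn F (Icc 0 T))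
    (hzF : ∀ t ∈ Icc 0 T, z t = z₀ + ∫ s in (0 : ℝ)..t, F s)
    (hπ0 : ∀ s ∈ Icc 0 T, 0 ≤ π s) (hπle : ∀ s ∈ Icc 0 T, π s ≤ s)
    (hγ : IntegrableOn γ (Icc 0 T)) (hγ0 : ∀ s ∈ Icc 0 T, 0 ≤ γ s)
    (hFz : ∀ s ∈ Icc 0 T, ‖F s‖ ≤ α * ‖z s‖ + β * ‖z (π s)‖ + γ s) :
    ∀ t ∈ Icc 0 T, ‖z t‖ ≤ (‖z₀‖ + ∫ s in (0 : ℝ)..T, γ s) * Real.exp ((α + β) * t) := by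
  intro t₀ ht₀
  have hγT : 0 ≤ ∫ s in (0 : ℝ)..T, γ s := intervalIntegral.integral_nonneg (ht₀.1.trans ht₀.2) hγ0
  refine le_mul_exp_of_le_add_integral_majorant (by positivity) (by positivity)
    (isCompact_Icc.image_of_continuousOn hz.norm).bddAbove (fun b hb hzb t ht => ?_) t₀ ht₀
  have hsub : Icc 0 t ⊆ Icc 0 T := Icc_subset_Icc_right ht.2
  have hFb : ∀ s ∈ Icc 0 t, ‖F s‖ ≤ (α + β) * b s + γ s := by
    intro s hs
    have hπs : π s ∈ Icc 0 T := ⟨hπ0 s (hsub hs), (hπle s (hsub hs)).trans (hsub hs).2⟩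
    calc ‖F s‖ ≤ α * ‖z s‖ + β * ‖z (π s)‖ + γ s := hFz s (hsub hs)
      _ ≤ α * b s + β * b s + γ s := by
        gcongr
        · exact hzb s (hsub hs)
        · exact (hzb _ hπs).trans (hb hπs (hsub hs) (hπle s (hsub hs)))
      _ = (α + β) * b s + γ s := by ring
  have hbt : IntervalIntegrable b volume 0 t :=
    (hb.mono (by rwa [uIcc_of_le ht.1])).intervalIntegrable
  have hγt : IntervalIntegrable γ volume 0 t :=
    hγ.intervalIntegrable_of_mem ht
  have hγtT : ∫ s in (0 : ℝ)..t, γ s ≤ ∫ s in (0 : ℝ)..T, γ s :=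
    intervalIntegral.integral_mono_interval le_rfl ht.1 ht.2
      ((ae_restrict_of_forall_mem measurableSet_Ioc) fun s hs => hγ0 s ⟨hs.1.le, hs.2⟩)
      (hγ.intervalIntegrable_of_mem ⟨ht.1.trans ht.2, le_rfl⟩)
  calc ‖z t‖ = ‖z₀ + ∫ s in (0 : ℝ)..t, F s‖ := by rw [hzF t ht]
    _ ≤ ‖z₀‖ + ∫ s in (0 : ℝ)..t, ‖F s‖ := by
      grw [norm_add_le, intervalIntegral.norm_integral_le_integral_norm ht.1]
    _ ≤ ‖z₀‖ + ∫ s in (0 : ℝ)..t, ((α + β) * b s + γ s) := by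
      gcongr
      exact intervalIntegral.integral_mono_on ht.1 (hF.intervalIntegrable_of_mem ht).norm
        ((hbt.const_mul _).add hγt) hFb
    _ = ‖z₀‖ + (∫ s in (0 : ℝ)..t, γ s) + (α + β) * ∫ s in (0 : ℝ)..t, b s := by
      rw [intervalIntegral.integral_add (hbt.const_mul _) hγt, intervalIntegral.integral_const_mul]
      ring
    _ ≤ ‖z₀‖ + (∫ s in (0 : ℝ)..T, γ s) + (α + β) * ∫ s in (0 : ℝ)..t, b s := by gcongr

theorem norm_sub_le_of_eq_add_integral {M : ℝ} (hF : IntegrableOn F (Icc 0 T))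
    (hzF : ∀ t ∈ Icc 0 T, z t = z₀ + ∫ s in (0 : ℝ)..t, F s) (hFM : ∀ s ∈ Icc 0 T, ‖F s‖ ≤ M)
    {s t : ℝ} (hs : s ∈ Icc 0 T) (ht : t ∈ Icc 0 T) (hst : s ≤ t) :
    ‖z t - z s‖ ≤ M * (t - s) := by
  rw [hzF t ht, hzF s hs, add_sub_add_left_eq_sub, intervalIntegral.integral_interval_sub_left
    (hF.intervalIntegrable_of_mem ht) (hF.intervalIntegrable_of_mem hs),
    ← abs_of_nonneg (sub_nonneg.2 hst)]
  refine intervalIntegral.norm_integral_le_of_norm_le_const fun r hr => hFM r ?_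
  rw [uIoc_of_le hst] at hr
  exact ⟨hs.1.trans hr.1.le, hr.2.trans ht.2⟩

end IntegralEquation

theorem rpow_intervalIntegral_le {g : ℝ → ℝ} {a b p : ℝ} (hab : a < b) (hp : 1 ≤ p)
    (hg0 : ∀ s ∈ Ioc a b, 0 ≤ g s) (hg : IntervalIntegrable g volume a b)
    (hgp : IntervalIntegrable (fun s => g s ^ p) volume a b) :
    (∫ s in a..b, g s) ^ p ≤ (b - a) ^ (p - 1) * ∫ s in a..b, g s ^ p := by
  have hjensen := (convexOn_rpow hp).map_set_average_le
    (continuousOn_id.rpow_const (p := p) fun _ _ => Or.inr (by linarith)) isClosed_Ici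
    (by simp [hab]) measure_Ioc_lt_top.ne ((ae_restrict_of_forall_mem measurableSet_Ioc) hg0)
    hg.1 hgp.1
  simp only [setAverage_eq, Real.volume_real_Ioc_of_le hab.le, smul_eq_mul] at hjensen
  rw [intervalIntegral.integral_of_le hab.le, intervalIntegral.integral_of_le hab.le]
  have hba : 0 < b - a := sub_pos.2 hab
  have hI : 0 ≤ ∫ s in Ioc a b, g s := setIntegral_nonneg measurableSet_Ioc hg0
  rw [Real.mul_rpow (inv_nonneg.2 hba.le) hI, Real.inv_rpow hba.le] at hjensen
  calc (∫ s in Ioc a b, g s) ^ p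
      = (b - a) ^ p * (((b - a) ^ p)⁻¹ * (∫ s in Ioc a b, g s) ^ p) := by
        field_simp
    _ ≤ (b - a) ^ p * ((b - a)⁻¹ * ∫ s in Ioc a b, g s ^ p) := by gcongr
    _ = (b - a) ^ (p - 1) * ∫ s in Ioc a b, g s ^ p := by
        rw [Real.rpow_sub_one hba.ne']
        ring

namespace SampleAndHold

variable {E : Type*} [NormedAddCommGroup E] [NormedSpace ℝ E] {A G : E →L[ℝ] E} {x₀ : E} {T : ℝ}
  {π : ℝ → ℝ} {x xn : ℝ → E}

theorem integrableOn_sampling_gap (hπm : Measurable π) (hπT : MapsTo π (Icc 0 T) (Icc 0 T)) :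
    IntegrableOn (fun s => s - π s) (Icc 0 T) :=
  continuous_id.integrableOn_Icc.sub (continuousOn_id.integrableOn_comp_of_mapsTo hπm hπT)

theorem integrableOn_rpow_sampling_gap (hπm : Measurable π) (hπT : MapsTo π (Icc 0 T) (Icc 0 T))
    (hπle : ∀ s ∈ Icc 0 T, π s ≤ s) {p : ℝ} (hp : 0 ≤ p) :
    IntegrableOn (fun s => (s - π s) ^ p) (Icc 0 T) := by
  refine Measure.integrableOn_of_bounded (M := T ^ p) measure_Icc_lt_top.ne
    ((measurable_id.sub hπm).pow_const p).aestronglyMeasurable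
    (ae_restrict_of_forall_mem measurableSet_Icc fun s hs => ?_)
  have hgap : 0 ≤ s - π s := sub_nonneg.2 (hπle s hs)
  rw [Real.norm_of_nonneg (Real.rpow_nonneg hgap p)]
  exact Real.rpow_le_rpow hgap (by linarith [(hπT hs).1, hs.2]) hp

theorem integrableOn_rhs (hπm : Measurable π) (hπT : MapsTo π (Icc 0 T) (Icc 0 T))
    (hxn : ContinuousOn xn (Icc 0 T)) :
    IntegrableOn (fun s => A (xn s) - G (xn (π s))) (Icc 0 T) :=
  (A.continuous.comp_continuousOn hxn).integrableOn_Icc.sub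
    ((G.continuous.comp_continuousOn hxn).integrableOn_comp_of_mapsTo hπm hπT)

theorem norm_rhs_le (s : ℝ) : ‖A (xn s) - G (xn (π s))‖ ≤ ‖A‖ * ‖xn s‖ + ‖G‖ * ‖xn (π s)‖ :=
  (norm_sub_le _ _).trans (add_le_add (A.le_opNorm _) (G.le_opNorm _))

theorem norm_le (hπm : Measurable π) (hπT : MapsTo π (Icc 0 T) (Icc 0 T))
    (hπle : ∀ s ∈ Icc 0 T, π s ≤ s) (hxn : ContinuousOn xn (Icc 0 T))
    (hxneq : ∀ t ∈ Icc 0 T, xn t = x₀ + ∫ s in (0 : ℝ)..t, (A (xn s) - G (xn (π s)))) :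
    ∀ t ∈ Icc 0 T, ‖xn t‖ ≤ ‖x₀‖ * Real.exp ((‖A‖ + ‖G‖) * t) := by
  simpa using norm_le_of_eq_add_integral_of_norm_le_delay (norm_nonneg A) (norm_nonneg G) hxn
    (integrableOn_rhs hπm hπT hxn) hxneq (fun s hs => (hπT hs).1) hπle integrableOn_zero
    (fun _ _ => le_rfl) fun s _ => by simpa using norm_rhs_le s

theorem norm_sub_sample_le (hπm : Measurable π) (hπT : MapsTo π (Icc 0 T) (Icc 0 T))
    (hπle : ∀ s ∈ Icc 0 T, π s ≤ s) (hxn : ContinuousOn xn (Icc 0 T))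
    (hxneq : ∀ t ∈ Icc 0 T, xn t = x₀ + ∫ s in (0 : ℝ)..t, (A (xn s) - G (xn (π s)))) :
    ∀ s ∈ Icc 0 T, ‖xn s - xn (π s)‖ ≤
      (‖A‖ + ‖G‖) * (‖x₀‖ * Real.exp ((‖A‖ + ‖G‖) * T)) * (s - π s) := by
  have hX : ∀ t ∈ Icc 0 T, ‖xn t‖ ≤ ‖x₀‖ * Real.exp ((‖A‖ + ‖G‖) * T) := fun t ht =>
    (norm_le hπm hπT hπle hxn hxneq t ht).trans (by gcongr; exact ht.2)
  intro s hs
  refine norm_sub_le_of_eq_add_integral (integrableOn_rhs hπm hπT hxn) hxneq (fun r hr => ?_)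
    (hπT hs) hs (hπle s hs)
  grw [norm_rhs_le, hX r hr, hX _ (hπT hr)]
  exact le_of_eq (by ring)

noncomputable def errorConst (A G : E →L[ℝ] E) (x₀ : E) (T : ℝ) : ℝ :=
  ‖G‖ * ((‖A‖ + ‖G‖) * (‖x₀‖ * Real.exp ((‖A‖ + ‖G‖) * T))) * Real.exp ((‖A‖ + ‖G‖) * T)

theorem errorConst_nonneg (A G : E →L[ℝ] E) (x₀ : E) (T : ℝ) : 0 ≤ errorConst A G x₀ T := by
  unfold errorConst
  positivity

theorem norm_sub_continuousFeedback_le (hπm : Measurable π) (hπT : MapsTo π (Icc 0 T) (Icc 0 T))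
    (hπle : ∀ s ∈ Icc 0 T, π s ≤ s) (hx : ContinuousOn x (Icc 0 T))
    (hxn : ContinuousOn xn (Icc 0 T))
    (hxeq : ∀ t ∈ Icc 0 T, x t = x₀ + ∫ s in (0 : ℝ)..t, (A (x s) - G (x s)))
    (hxneq : ∀ t ∈ Icc 0 T, xn t = x₀ + ∫ s in (0 : ℝ)..t, (A (xn s) - G (xn (π s)))) :
    ∀ t ∈ Icc 0 T, ‖xn t - x t‖ ≤ errorConst A G x₀ T * ∫ s in (0 : ℝ)..T, (s - π s) := by
  set X := (‖A‖ + ‖G‖) * (‖x₀‖ * Real.exp ((‖A‖ + ‖G‖) * T))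
  have hFx : IntegrableOn (fun s => A (x s) - G (x s)) (Icc 0 T) :=
    ((A - G).continuous.comp_continuousOn hx).integrableOn_Icc
  have heq : ∀ t ∈ Icc 0 T, xn t - x t =
      0 + ∫ s in (0 : ℝ)..t, ((A (xn s) - G (xn (π s))) - (A (x s) - G (x s))) := by
    intro t ht
    rw [hxneq t ht, hxeq t ht, intervalIntegral.integral_sub
      ((integrableOn_rhs hπm hπT hxn).intervalIntegrable_of_mem ht)
      (hFx.intervalIntegrable_of_mem ht)]
    abel
  have hF : ∀ s ∈ Icc 0 T, ‖(A (xn s) - G (xn (π s))) - (A (x s) - G (x s))‖ ≤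
      ‖A‖ * ‖xn s - x s‖ + ‖G‖ * ‖xn s - x s‖ + ‖G‖ * X * (s - π s) := by
    intro s hs
    have hsplit : (A (xn s) - G (xn (π s))) - (A (x s) - G (x s)) =
        A (xn s - x s) - G (xn s - x s) + G (xn s - xn (π s)) := by
      simp only [map_sub]; abel
    grw [hsplit, norm_add_le, _root_.norm_sub_le, A.le_opNorm, G.le_opNorm, G.le_opNorm,
      norm_sub_sample_le hπm hπT hπle hxn hxneq s hs]
    exact le_of_eq (by ring)
  intro t ht
  have hI : 0 ≤ ∫ s in (0 : ℝ)..T, (s - π s) :=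
    intervalIntegral.integral_nonneg (ht.1.trans ht.2) fun s hs => sub_nonneg.2 (hπle s hs)
  have hbound : ‖xn t - x t‖ ≤ _ := norm_le_of_eq_add_integral_of_norm_le_delay (π := id)
    (norm_nonneg A) (norm_nonneg G) (hxn.sub hx) ((integrableOn_rhs hπm hπT hxn).sub hFx) heq
    (fun s hs => hs.1) (fun _ _ => le_rfl) ((integrableOn_sampling_gap hπm hπT).const_mul _)
    (fun s hs => mul_nonneg (by positivity) (sub_nonneg.2 (hπle s hs))) hF t ht
  rw [norm_zero, zero_add, intervalIntegral.integral_const_mul] at hbound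
  grw [hbound, ht.2]
  exact le_of_eq (by unfold errorConst; ring)

theorem rpow_norm_sub_continuousFeedback_le (hT : 0 < T) {p : ℝ} (hp : 1 ≤ p)
    (hπm : Measurable π) (hπT : MapsTo π (Icc 0 T) (Icc 0 T)) (hπle : ∀ s ∈ Icc 0 T, π s ≤ s)
    (hx : ContinuousOn x (Icc 0 T)) (hxn : ContinuousOn xn (Icc 0 T))
    (hxeq : ∀ t ∈ Icc 0 T, x t = x₀ + ∫ s in (0 : ℝ)..t, (A (x s) - G (x s)))
    (hxneq : ∀ t ∈ Icc 0 T, xn t = x₀ + ∫ s in (0 : ℝ)..t, (A (xn s) - G (xn (π s)))) :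
    ∀ t ∈ Icc 0 T, ‖xn t - x t‖ ^ p ≤
      errorConst A G x₀ T ^ p * T ^ (p - 1) * ∫ s in (0 : ℝ)..T, (s - π s) ^ p := by
  intro t ht
  have hgap : ∀ s ∈ Icc 0 T, 0 ≤ s - π s := fun s hs => sub_nonneg.2 (hπle s hs)
  have hjensen := rpow_intervalIntegral_le hT hp (fun s hs => hgap s (Ioc_subset_Icc_self hs))
    ((integrableOn_sampling_gap hπm hπT).intervalIntegrable_of_mem ⟨hT.le, le_rfl⟩)
    ((integrableOn_rpow_sampling_gap hπm hπT hπle (zero_le_one.trans hp)).intervalIntegrable_of_mem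
      ⟨hT.le, le_rfl⟩)
  rw [sub_zero] at hjensen
  have hC := errorConst_nonneg A G x₀ T
  calc ‖xn t - x t‖ ^ p ≤ (errorConst A G x₀ T * ∫ s in (0 : ℝ)..T, (s - π s)) ^ p := by
        grw [norm_sub_continuousFeedback_le hπm hπT hπle hx hxn hxeq hxneq t ht]
    _ = errorConst A G x₀ T ^ p * (∫ s in (0 : ℝ)..T, (s - π s)) ^ p :=
        Real.mul_rpow hC (intervalIntegral.integral_nonneg hT.le hgap)
    _ ≤ errorConst A G x₀ T ^ p * T ^ (p - 1) * ∫ s in (0 : ℝ)..T, (s - π s) ^ p := by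
        grw [hjensen, mul_assoc]

end SampleAndHold

theorem stmt_10_general (d m : ℕ)
    (A : EuclideanSpace ℝ (Fin d) →L[ℝ] EuclideanSpace ℝ (Fin d))
    (B : EuclideanSpace ℝ (Fin m) →L[ℝ] EuclideanSpace ℝ (Fin d))
    (K : EuclideanSpace ℝ (Fin d) →L[ℝ] EuclideanSpace ℝ (Fin m))
    (x₀ : EuclideanSpace ℝ (Fin d)) (T : ℝ) (hT : 0 < T) (p : ℝ) (hp : 1 ≤ p) :
    ∃ C : ℝ, 0 < C ∧
      ∀ (π : ℝ → ℝ), Measurable π →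
        (∀ s ∈ Set.Icc (0 : ℝ) T, π s ∈ Set.Icc (0 : ℝ) T) →
        (∀ s ∈ Set.Icc (0 : ℝ) T, π s ≤ s) →
        ∀ (x xn : ℝ → EuclideanSpace ℝ (Fin d)),
          ContinuousOn x (Set.Icc (0 : ℝ) T) →
          ContinuousOn xn (Set.Icc (0 : ℝ) T) →
          (∀ t ∈ Set.Icc (0 : ℝ) T,
            x t = x₀ + ∫ s in (0 : ℝ)..t, (A (x s) - B (K (x s)))) →
          (∀ t ∈ Set.Icc (0 : ℝ) T,
            xn t = x₀ + ∫ s in (0 : ℝ)..t, (A (xn s) - B (K (xn (π s))))) →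
          (⨆ t : Set.Icc (0 : ℝ) T, ‖xn t - x t‖ ^ p)
            ≤ C * ∫ s in (0 : ℝ)..T, (s - π s) ^ p := by
  set C₀ := SampleAndHold.errorConst A (B.comp K) x₀ T
  have hC₀ : 0 ≤ C₀ := SampleAndHold.errorConst_nonneg A (B.comp K) x₀ T
  refine ⟨C₀ ^ p * T ^ (p - 1) + 1, by positivity, ?_⟩
  intro π hπm hπT hπle x xn hx hxn hxeq hxneq
  have hIp : 0 ≤ ∫ s in (0 : ℝ)..T, (s - π s) ^ p := intervalIntegral.integral_nonneg hT.le
    fun s hs => Real.rpow_nonneg (sub_nonneg.2 (hπle s hs)) p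
  have : Nonempty (Icc 0 T) := ⟨⟨0, le_rfl, hT.le⟩⟩
  refine ciSup_le fun ⟨t, ht⟩ => ?_
  calc ‖xn t - x t‖ ^ p ≤ C₀ ^ p * T ^ (p - 1) * ∫ s in (0 : ℝ)..T, (s - π s) ^ p :=
        SampleAndHold.rpow_norm_sub_continuousFeedback_le (G := B.comp K) hT hp hπm hπT hπle hx hxn
          hxeq hxneq t ht
    _ ≤ (C₀ ^ p * T ^ (p - 1) + 1) * ∫ s in (0 : ℝ)..T, (s - π s) ^ p := by
        rw [add_one_mul]
        exact le_add_of_nonneg_right hIp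

/-- Deterministic (pathwise) comparison between the continuously
controlled trajectory `x` and the sample-and-hold trajectory `xⁿ`: there is a constant
`C` depending only on `A, B, K, T, p, ‖x₀‖` such that for every sampling map `π` and
every pair of solutions, `sup_{0≤t≤T} ‖xⁿ(t) − x(t)‖^p ≤ C ∫₀ᵀ (s − π(s))^p ds`. -/
theorem stmt_10 (d m : ℕ) (hd : 0 < d) (hm : 0 < m)
    (A : EuclideanSpace ℝ (Fin d) →L[ℝ] EuclideanSpace ℝ (Fin d))
    (B : EuclideanSpace ℝ (Fin m) →L[ℝ] EuclideanSpace ℝ (Fin d))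
    (K : EuclideanSpace ℝ (Fin d) →L[ℝ] EuclideanSpace ℝ (Fin m))
    (x₀ : EuclideanSpace ℝ (Fin d)) (T : ℝ) (hT : 0 < T) (p : ℝ) (hp : 1 ≤ p) :
    ∃ C : ℝ, 0 < C ∧
      ∀ (π : ℝ → ℝ), Measurable π →
        (∀ s ∈ Set.Icc (0 : ℝ) T, π s ∈ Set.Icc (0 : ℝ) T) →
        (∀ s ∈ Set.Icc (0 : ℝ) T, π s ≤ s) →
        ∀ (x xn : ℝ → EuclideanSpace ℝ (Fin d)),
          ContinuousOn x (Set.Icc (0 : ℝ) T) →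
          ContinuousOn xn (Set.Icc (0 : ℝ) T) →
          (∀ t ∈ Set.Icc (0 : ℝ) T,
            x t = x₀ + ∫ s in (0 : ℝ)..t, (A (x s) - B (K (x s)))) →
          (∀ t ∈ Set.Icc (0 : ℝ) T,
            xn t = x₀ + ∫ s in (0 : ℝ)..t, (A (xn s) - B (K (xn (π s))))) →
          (⨆ t : Set.Icc (0 : ℝ) T, ‖xn t - x t‖ ^ p)
            ≤ C * ∫ s in (0 : ℝ)..T, (s - π s) ^ p :=
  stmt_10_general d m A B K x₀ T hT p hp
end

section
/- Let A ∈ ℝ^{d×d}, B ∈ ℝ^{d×m}, K ∈ ℝ^{m×d}, x₀ ∈ ℝ^d, T > 0 and ε > 0. Let π : [0,T] → [0,T] be measurable with π(s) ≤ s for all s, and let w : [0,T] → ℝ^d be continuous with w(0) = 0. Suppose X : [0,T] → ℝ^d is continuous and satisfies X(t) = x₀ + ∫₀ᵗ (A X(s) − BK X(π(s))) ds + ε w(t), and xⁿ : [0,T] → ℝ^d is continuous and satisfies xⁿ(t) = x₀ + ∫₀ᵗ (A xⁿ(s) − BK xⁿ(π(s))) ds. Then sup_{0 ≤ t ≤ T}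 ‖X(t) − xⁿ(t)‖ ≤ ε · exp((‖A‖ + ‖B‖·‖K‖) T) · sup_{0 ≤ t ≤ T} ‖w(t)‖. -/
/-!
The error `δ = X − xⁿ` solves `δ(t) = ∫₀ᵗ (A δ(s) − B K δ(π s)) ds + ε w(t)`. Hence `‖δ‖` is
bounded by `u(t) = ε sup ‖w‖ + ∫₀ᵗ (‖A‖ ‖δ(s)‖ + ‖B‖ ‖K‖ ‖δ(π s)‖) ds`, which is nondecreasing;
since `π s ≤ s`, the delayed term is also bounded by `u(s)`, so `u(t) ≤ ε sup ‖w‖ + L ∫₀ᵗ u` with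
`L = ‖A‖ + ‖B‖ ‖K‖`, and the integral form of Grönwall's inequality gives `u(t) ≤ ε sup ‖w‖ e^{L t}`.
-/

open MeasureTheory Set

section Integrability

variable {E : Type*} [NormedAddCommGroup E]

theorem ContinuousOn.intervalIntegrable_comp_of_mapsTo {Z : ℝ → E} {π : ℝ → ℝ} {a b t : ℝ}
    (hZ : ContinuousOn Z (Icc a b)) (hπ : Measurable π) (hπ_maps : MapsTo π (Icc a b) (Icc a b))
    (ht : t ∈ Icc a b) : IntervalIntegrable (fun s => Z (π s)) volume a t := by
  have hab : a ≤ b := ht.1.trans ht.2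
  -- Clamping `Z` outside `[a, b]` makes it continuous on `ℝ`, hence `Ze ∘ π` measurable.
  set Ze := IccExtend hab ((Icc a b).domRestrict Z)
  have hZe : Continuous Ze := hZ.domRestrict.Icc_extend'
  obtain ⟨C, hC⟩ := (isCompact_range hZ.domRestrict).isBounded.exists_norm_le
  have hZe_int : IntegrableOn (fun s => Ze (π s)) (Icc a t) volume :=
    Measure.integrableOn_of_bounded measure_Icc_lt_top.ne
      (hZe.comp_aestronglyMeasurable hπ.aestronglyMeasurable)
      (ae_of_all _ fun s => hC _ (by rw [← IccExtend_range]; exact mem_range_self _))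
  rw [intervalIntegrable_iff_integrableOn_Icc_of_le ht.1]
  exact hZe_int.congr_fun (fun s hs => IccExtend_of_mem _ _ (hπ_maps ⟨hs.1, hs.2.trans ht.2⟩))
    measurableSet_Icc

theorem ContinuousOn.intervalIntegrable_norm_add_norm_comp {Z : ℝ → E} {π : ℝ → ℝ}
    {a b t : ℝ} (hZ : ContinuousOn Z (Icc a b)) (hπ : Measurable π)
    (hπ_maps : MapsTo π (Icc a b) (Icc a b)) (ht : t ∈ Icc a b) (α β : ℝ) :
    IntervalIntegrable (fun s => α * ‖Z s‖ + β * ‖Z (π s)‖) volume a t :=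
  (((hZ.mono (Icc_subset_Icc_right ht.2)).norm.intervalIntegrable_of_Icc ht.1).const_mul α).add
    ((hZ.norm.intervalIntegrable_comp_of_mapsTo hπ hπ_maps ht).const_mul β)

end Integrability

section Gronwall

theorem le_mul_exp_of_le_add_mul_integral {u : ℝ → ℝ} {a b c L : ℝ}
    (hu : ContinuousOn u (Icc a b)) (hL : 0 ≤ L)
    (h : ∀ t ∈ Icc a b, u t ≤ c + L * ∫ s in a..t, u s) :
    ∀ t ∈ Icc a b, u t ≤ c * Real.exp (L * (t - a)) := by
  intro t ht
  have hab : a ≤ b := ht.1.trans ht.2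
  set ue := IccExtend hab (domRestrict (Icc a b) u)
  have hue : Continuous ue := hu.domRestrict.Icc_extend'
  have hue_eq : EqOn ue u (Icc a b) := fun s hs => IccExtend_of_mem _ _ hs
  -- `G' = L u ≤ L G` on `[a, b]`, so the differential Grönwall inequality applies to `G ≥ u`.
  set G : ℝ → ℝ := fun t => c + L * ∫ s in a..t, ue s
  have hG : ∀ x, HasDerivAt G (L * ue x) x := fun x =>
    ((hue.integral_hasStrictDerivAt a x).hasDerivAt.const_mul L).const_add c
  have hu_le_G : ∀ t ∈ Icc a b, u t ≤ G t := by
    intro t ht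
    have hsub : uIcc a t ⊆ Icc a b := by
      rw [uIcc_of_le ht.1]; exact Icc_subset_Icc_right ht.2
    simpa only [G, intervalIntegral.integral_congr (hue_eq.mono hsub)] using h t ht
  have hG_le := le_gronwallBound_of_liminf_deriv_right_le (f := G) (a := a) (b := b) (δ := c)
    (K := L) (ε := 0) (continuous_iff_continuousAt.2 fun x => (hG x).continuousAt).continuousOn
    (fun x _ _ hr => (hG x).hasDerivWithinAt.liminf_right_slope_le hr)
    (by simp [G]) fun x hx => by
      rw [add_zero, hue_eq (Ico_subset_Icc_self hx)]
      exact mul_le_mul_of_nonneg_left (hu_le_G x (Ico_subset_Icc_self hx)) hL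
  calc u t ≤ G t := hu_le_G t ht
    _ ≤ gronwallBound c L 0 (t - a) := hG_le t ht
    _ = c * Real.exp (L * (t - a)) := gronwallBound_ε0 c L _

theorem norm_le_mul_exp_of_le_add_integral_delay {E : Type*} [NormedAddCommGroup E]
    {δ : ℝ → E} {π : ℝ → ℝ} {t₀ T a b c : ℝ}
    (hδ : ContinuousOn δ (Icc t₀ T)) (hπ : Measurable π)
    (hπ_maps : MapsTo π (Icc t₀ T) (Icc t₀ T)) (hπ_le : ∀ s ∈ Icc t₀ T, π s ≤ s)
    (ha : 0 ≤ a) (hb : 0 ≤ b)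
    (h : ∀ t ∈ Icc t₀ T, ‖δ t‖ ≤ c + ∫ s in t₀..t, (a * ‖δ s‖ + b * ‖δ (π s)‖)) :
    ∀ t ∈ Icc t₀ T, ‖δ t‖ ≤ c * Real.exp ((a + b) * (t - t₀)) := by
  intro t ht
  have hT : t₀ ≤ T := ht.1.trans ht.2
  set φ : ℝ → ℝ := fun s => a * ‖δ s‖ + b * ‖δ (π s)‖
  have hφ_int : ∀ r ∈ Icc t₀ T, IntervalIntegrable φ volume t₀ r := fun r hr =>
    hδ.intervalIntegrable_norm_add_norm_comp hπ hπ_maps hr a b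
  set u : ℝ → ℝ := fun t => c + ∫ s in t₀..t, φ s
  have hu_cont : ContinuousOn u (Icc t₀ T) := by
    have := intervalIntegral.continuousOn_primitive_interval' (hφ_int T (right_mem_Icc.2 hT))
      left_mem_uIcc
    rw [uIcc_of_le hT] at this
    exact continuousOn_const.add this
  have hu_mono : MonotoneOn u (Icc t₀ T) := fun s hs r hr hsr =>
    add_le_add le_rfl (intervalIntegral.integral_mono_interval le_rfl hs.1 hsr
      (ae_of_all _ fun s => by positivity) (hφ_int r hr))
  have hφ_le : ∀ s ∈ Icc t₀ T, φ s ≤ (a + b) * u s := by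
    intro s hs
    have hδπ : ‖δ (π s)‖ ≤ u s :=
      (h _ (hπ_maps hs)).trans (hu_mono (hπ_maps hs) hs (hπ_le s hs))
    calc φ s = a * ‖δ s‖ + b * ‖δ (π s)‖ := rfl
      _ ≤ a * u s + b * u s := by gcongr; exact h s hs
      _ = (a + b) * u s := by ring
  refine (h t ht).trans (le_mul_exp_of_le_add_mul_integral hu_cont (add_nonneg ha hb)
    (fun r hr => ?_) t ht)
  rw [← intervalIntegral.integral_const_mul]
  refine add_le_add le_rfl (intervalIntegral.integral_mono_on hr.1 (hφ_int r hr) ?_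
    fun s hs => hφ_le s ⟨hs.1, hs.2.trans hr.2⟩)
  exact ((hu_cont.mono (Icc_subset_Icc_right hr.2)).intervalIntegrable_of_Icc hr.1).const_mul _

end Gronwall

section SampledFeedback

variable {E F : Type*} [NormedAddCommGroup E] [NormedSpace ℝ E] [NormedAddCommGroup F]
  [NormedSpace ℝ F] (A : E →L[ℝ] E) (B : F →L[ℝ] E) (K : E →L[ℝ] F) (π : ℝ → ℝ)

def sampledFeedback (Z : ℝ → E) (s : ℝ) : E := A (Z s) - B (K (Z (π s)))

theorem sampledFeedback_sub (Z Y : ℝ → E) :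
    sampledFeedback A B K π (Z - Y) = sampledFeedback A B K π Z - sampledFeedback A B K π Y := by
  funext s
  simp only [sampledFeedback, Pi.sub_apply, map_sub]
  abel

theorem norm_sampledFeedback_le (Z : ℝ → E) (s : ℝ) :
    ‖sampledFeedback A B K π Z s‖ ≤ ‖A‖ * ‖Z s‖ + ‖B‖ * ‖K‖ * ‖Z (π s)‖ :=
  calc ‖sampledFeedback A B K π Z s‖ ≤ ‖A (Z s)‖ + ‖B (K (Z (π s)))‖ := norm_sub_le _ _
    _ ≤ ‖A‖ * ‖Z s‖ + ‖B‖ * ‖K‖ * ‖Z (π s)‖ := by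
      gcongr
      · exact A.le_opNorm _
      · exact B.le_opNorm_of_le (K.le_opNorm _) |>.trans_eq (mul_assoc _ _ _).symm

variable {A B K π}

theorem ContinuousOn.intervalIntegrable_sampledFeedback {Z : ℝ → E} {a b t : ℝ}
    (hZ : ContinuousOn Z (Icc a b)) (hπ : Measurable π) (hπ_maps : MapsTo π (Icc a b) (Icc a b))
    (ht : t ∈ Icc a b) : IntervalIntegrable (sampledFeedback A B K π Z) volume a t :=
  ((A.continuous.comp_continuousOn (hZ.mono (Icc_subset_Icc_right ht.2))).intervalIntegrable_of_Icc
    ht.1).sub <| ((B ∘L K).continuous.comp_continuousOn hZ).intervalIntegrable_comp_of_mapsTo hπ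
      hπ_maps ht

theorem sub_eq_integral_sampledFeedback_add {X Y : ℝ → E} {x₀ e : E} {t₀ t : ℝ}
    (hXi : IntervalIntegrable (sampledFeedback A B K π X) volume t₀ t)
    (hYi : IntervalIntegrable (sampledFeedback A B K π Y) volume t₀ t)
    (hX : X t = x₀ + (∫ s in t₀..t, sampledFeedback A B K π X s) + e)
    (hY : Y t = x₀ + ∫ s in t₀..t, sampledFeedback A B K π Y s) :
    X t - Y t = (∫ s in t₀..t, sampledFeedback A B K π (X - Y) s) + e := by
  rw [hX, hY, sampledFeedback_sub]
  simp only [Pi.sub_apply, intervalIntegral.integral_sub hXi hYi]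
  abel

end SampledFeedback

theorem stmt_11_general (d m : ℕ)
    (A : EuclideanSpace ℝ (Fin d) →L[ℝ] EuclideanSpace ℝ (Fin d))
    (B : EuclideanSpace ℝ (Fin m) →L[ℝ] EuclideanSpace ℝ (Fin d))
    (K : EuclideanSpace ℝ (Fin d) →L[ℝ] EuclideanSpace ℝ (Fin m))
    (x₀ : EuclideanSpace ℝ (Fin d)) (T : ℝ) (ε : ℝ) (hε : 0 < ε)
    (π : ℝ → ℝ) (hπ_meas : Measurable π)
    (hπ_mem : ∀ s ∈ Set.Icc (0 : ℝ) T, π s ∈ Set.Icc (0 : ℝ) T)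
    (hπ_le : ∀ s ∈ Set.Icc (0 : ℝ) T, π s ≤ s)
    (w : ℝ → EuclideanSpace ℝ (Fin d))
    (hw_cont : ContinuousOn w (Set.Icc (0 : ℝ) T))
    (X xn : ℝ → EuclideanSpace ℝ (Fin d))
    (hX_cont : ContinuousOn X (Set.Icc (0 : ℝ) T))
    (hxn_cont : ContinuousOn xn (Set.Icc (0 : ℝ) T))
    (hX : ∀ t ∈ Set.Icc (0 : ℝ) T,
      X t = x₀ + (∫ s in (0 : ℝ)..t, (A (X s) - B (K (X (π s))))) + ε • w t)
    (hxn : ∀ t ∈ Set.Icc (0 : ℝ) T,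
      xn t = x₀ + ∫ s in (0 : ℝ)..t, (A (xn s) - B (K (xn (π s))))) :
    (⨆ t : Set.Icc (0 : ℝ) T, ‖X t - xn t‖)
      ≤ ε * Real.exp ((‖A‖ + ‖B‖ * ‖K‖) * T) * ⨆ t : Set.Icc (0 : ℝ) T, ‖w t‖ := by
  set W := ⨆ t : Icc (0 : ℝ) T, ‖w t‖
  have hW : 0 ≤ W := Real.iSup_nonneg fun _ => norm_nonneg _
  have hw_le : ∀ t ∈ Icc (0 : ℝ) T, ‖w t‖ ≤ W := fun t ht =>
    le_ciSup (image_eq_range _ _ ▸ isCompact_Icc.bddAbove_image hw_cont.norm) ⟨t, ht⟩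
  have hδ : ContinuousOn (X - xn) (Icc 0 T) := hX_cont.sub hxn_cont
  have hδ_le : ∀ t ∈ Icc (0 : ℝ) T, ‖(X - xn) t‖ ≤
      ε * W + ∫ s in 0..t, (‖A‖ * ‖(X - xn) s‖ + ‖B‖ * ‖K‖ * ‖(X - xn) (π s)‖) := by
    intro t ht
    rw [Pi.sub_apply, sub_eq_integral_sampledFeedback_add
      (hX_cont.intervalIntegrable_sampledFeedback hπ_meas hπ_mem ht)
      (hxn_cont.intervalIntegrable_sampledFeedback hπ_meas hπ_mem ht) (hX t ht) (hxn t ht)]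
    refine (norm_add_le _ _).trans ?_
    rw [add_comm, norm_smul, Real.norm_of_nonneg hε.le]
    gcongr
    · exact hw_le t ht
    · exact intervalIntegral.norm_integral_le_of_norm_le ht.1
        (ae_of_all _ fun s _ => norm_sampledFeedback_le A B K π _ s)
        (hδ.intervalIntegrable_norm_add_norm_comp hπ_meas hπ_mem ht _ _)
  have hgron := norm_le_mul_exp_of_le_add_integral_delay hδ hπ_meas hπ_mem hπ_le
    (norm_nonneg A) (by positivity) hδ_le
  refine Real.iSup_le (fun t => (hgron t t.2).trans ?_) (by positivity)
  rw [sub_zero, mul_right_comm]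
  gcongr
  exact t.2.2

/-- Pathwise Gronwall comparison between the noise-perturbed
sample-and-hold trajectory `X` and the unperturbed one `xⁿ` (same sampling map `π`):
`sup_{0≤t≤T} ‖X(t) − xⁿ(t)‖ ≤ ε · exp((‖A‖+‖B‖·‖K‖)T) · sup_{0≤t≤T} ‖w(t)‖`. -/
theorem stmt_11 (d m : ℕ) (hd : 0 < d) (hm : 0 < m)
    (A : EuclideanSpace ℝ (Fin d) →L[ℝ] EuclideanSpace ℝ (Fin d))
    (B : EuclideanSpace ℝ (Fin m) →L[ℝ] EuclideanSpace ℝ (Fin d))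
    (K : EuclideanSpace ℝ (Fin d) →L[ℝ] EuclideanSpace ℝ (Fin m))
    (x₀ : EuclideanSpace ℝ (Fin d)) (T : ℝ) (hT : 0 < T) (ε : ℝ) (hε : 0 < ε)
    (π : ℝ → ℝ) (hπ_meas : Measurable π)
    (hπ_mem : ∀ s ∈ Set.Icc (0 : ℝ) T, π s ∈ Set.Icc (0 : ℝ) T)
    (hπ_le : ∀ s ∈ Set.Icc (0 : ℝ) T, π s ≤ s)
    (w : ℝ → EuclideanSpace ℝ (Fin d))
    (hw_cont : ContinuousOn w (Set.Icc (0 : ℝ) T)) (hw0 : w 0 = 0)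
    (X xn : ℝ → EuclideanSpace ℝ (Fin d))
    (hX_cont : ContinuousOn X (Set.Icc (0 : ℝ) T))
    (hxn_cont : ContinuousOn xn (Set.Icc (0 : ℝ) T))
    (hX : ∀ t ∈ Set.Icc (0 : ℝ) T,
      X t = x₀ + (∫ s in (0 : ℝ)..t, (A (X s) - B (K (X (π s))))) + ε • w t)
    (hxn : ∀ t ∈ Set.Icc (0 : ℝ) T,
      xn t = x₀ + ∫ s in (0 : ℝ)..t, (A (xn s) - B (K (xn (π s))))) :
    (⨆ t : Set.Icc (0 : ℝ) T, ‖X t - xn t‖)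
      ≤ ε * Real.exp ((‖A‖ + ‖B‖ * ‖K‖) * T) * ⨆ t : Set.Icc (0 : ℝ) T, ‖w t‖ :=
  stmt_11_general d m A B K x₀ T ε hε π hπ_meas hπ_mem hπ_le w hw_cont X xn hX_cont hxn_cont hX hxn
end

section
/- Let (ξ_i)_{i≥1} be i.i.d. positive random variables with E[e^{θξ₁}] < ∞ for all θ > 0 and Var(ξ₁) > 0, and let τ_k = ∑_{i=1}^k ξ_i (τ_0 = 0). Then for every T > 0 there exists a constant C depending only on T and the distribution of ξ₁ such that for all n ∈ ℕ: E[ ( (E[ξ₁]/n) · ∑_{k=0}^{⌈nT/E[ξ₁]⌉ − 1} | τ_k − k E[ξ₁] | / (Var(ξ₁) √n) )⁶ ] ≤ C. -/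
/-! The centered increments `Y = ξ - E ξ` satisfy `E exp (s Y) ≤ 1 + s² c` for `|s| ≤ 1`, with
`c = E [Y² exp |Y|]`, so by independence the centered walk `S_k = τ_k - k E ξ` has
`E exp (± S_k / √k) ≤ (1 + c / k) ^ k ≤ exp c`. As `|x| ^ 6 ≤ 6! (exp x + exp (-x))`, this gives
`E |S_k| ^ 6 ≤ 2 · 6! · exp c · k³`. Jensen's inequality `(∑_{k<N} a_k) ^ 6 ≤ N ^ 5 ∑_{k<N} a_k ^ 6`
then bounds the sixth moment of the Riemann sum by a multiple of `(N / n) ^ 9`, and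
`N = ⌈n T / E ξ⌉ ≤ n (T / E ξ + 1)`. -/

open MeasureTheory ProbabilityTheory Real Finset

lemma abs_pow_le_factorial_mul_exp_add_exp (n : ℕ) (x : ℝ) :
    |x| ^ n ≤ n.factorial * (exp x + exp (-x)) := by
  have h := pow_div_factorial_le_exp _ (abs_nonneg x) n
  rw [div_le_iff₀ (by positivity)] at h
  calc |x| ^ n ≤ exp |x| * n.factorial := h
    _ ≤ n.factorial * (exp x + exp (-x)) := by rw [mul_comm]; gcongr; exact exp_abs_le x

lemma exp_le_one_add_add_sq_mul_exp_abs (t : ℝ) : exp t ≤ 1 + t + t ^ 2 * exp |t| := by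
  have hexp : exp t * (1 - t) ≤ 1 := by
    calc exp t * (1 - t) ≤ exp t * exp (-t) := by gcongr; linarith [add_one_le_exp (-t)]
      _ = 1 := by rw [← exp_add, add_neg_cancel, exp_zero]
  rcases le_or_gt (-1) t with ht | ht
  · have : t ^ 2 * exp t ≤ t ^ 2 * exp |t| := by gcongr; exact le_abs_self t
    nlinarith [mul_le_mul_of_nonneg_right hexp (by linarith : 0 ≤ 1 + t)]
  · have : 1 ≤ exp |t| := one_le_exp (abs_nonneg t)
    have : exp t ≤ 1 := exp_le_one_iff.mpr (by linarith)
    nlinarith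

section

variable {Ω : Type*} [MeasurableSpace Ω] {μ : Measure Ω}

lemma integrable_exp_mul_of_nonneg [IsFiniteMeasure μ] {X : Ω → ℝ} (hX : AEMeasurable X μ)
    (hX0 : ∀ᵐ ω ∂μ, 0 ≤ X ω) (hpos : ∀ θ, 0 < θ → Integrable (fun ω ↦ exp (θ * X ω)) μ)
    (t : ℝ) : Integrable (fun ω ↦ exp (t * X ω)) μ := by
  refine (le_or_gt t 0).elim (fun ht ↦ (integrable_const 1).mono' (by fun_prop) ?_) (hpos t)
  filter_upwards [hX0] with ω hω
  rw [norm_of_nonneg (exp_pos _).le, exp_le_one_iff]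
  exact mul_nonpos_of_nonpos_of_nonneg ht hω

lemma integrable_exp_mul_sub_const {X : Ω → ℝ} {t : ℝ}
    (h : Integrable (fun ω ↦ exp (t * X ω)) μ) (a : ℝ) :
    Integrable (fun ω ↦ exp (t * (X ω - a))) μ := by
  refine (h.mul_const (exp (-(t * a)))).congr (ae_of_all _ fun ω ↦ ?_)
  simp only [← exp_add]
  ring_nf

lemma mgf_le_one_add_sq_mul [IsProbabilityMeasure μ] {X : Ω → ℝ} (hX : Integrable X μ)
    (hX0 : μ[X] = 0) (hX2 : Integrable (fun ω ↦ X ω ^ 2 * exp |X ω|) μ) {s : ℝ} (hs : |s| ≤ 1) :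
    mgf X μ s ≤ 1 + s ^ 2 * μ[fun ω ↦ X ω ^ 2 * exp |X ω|] := by
  have hpt (ω : Ω) : exp (s * X ω) ≤ 1 + s * X ω + s ^ 2 * (X ω ^ 2 * exp |X ω|) := by
    have : |s * X ω| ≤ |X ω| := by
      rw [abs_mul]; exact mul_le_of_le_one_left (abs_nonneg _) hs
    calc exp (s * X ω) ≤ 1 + s * X ω + (s * X ω) ^ 2 * exp |s * X ω| :=
          exp_le_one_add_add_sq_mul_exp_abs _
      _ ≤ _ := by rw [mul_pow, mul_assoc]; gcongr
  have hlin : Integrable (fun ω ↦ 1 + s * X ω) μ := (integrable_const 1).add (hX.const_mul s)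
  calc mgf X μ s ≤ ∫ ω, 1 + s * X ω + s ^ 2 * (X ω ^ 2 * exp |X ω|) ∂μ :=
        integral_mono_of_nonneg (ae_of_all _ fun ω ↦ (exp_pos _).le)
          (hlin.add (hX2.const_mul _)) (ae_of_all _ hpt)
    _ = _ := by
        rw [integral_add hlin (hX2.const_mul _), integral_add (integrable_const 1) (hX.const_mul s),
          integral_const_mul, integral_const_mul, hX0]
        simp

lemma integral_abs_pow_le_of_mgf_le {X : Ω → ℝ} {t M : ℝ} (ht : 0 < t)
    (hpos : Integrable (fun ω ↦ exp (t * X ω)) μ) (hneg : Integrable (fun ω ↦ exp (-t * X ω)) μ)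
    (hMpos : mgf X μ t ≤ M) (hMneg : mgf X μ (-t) ≤ M) (n : ℕ) :
    ∫ ω, |X ω| ^ n ∂μ ≤ 2 * n.factorial * M / t ^ n := by
  have hpt (ω : Ω) :
      |X ω| ^ n ≤ n.factorial * (exp (t * X ω) + exp (-t * X ω)) / t ^ n := by
    have h := abs_pow_le_factorial_mul_exp_add_exp n (t * X ω)
    rw [abs_mul, abs_of_pos ht, mul_pow, ← neg_mul] at h
    rwa [le_div_iff₀ (by positivity), mul_comm]
  calc ∫ ω, |X ω| ^ n ∂μ
      ≤ ∫ ω, n.factorial * (exp (t * X ω) + exp (-t * X ω)) / t ^ n ∂μ :=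
        integral_mono_of_nonneg (ae_of_all _ fun ω ↦ by positivity)
          (((hpos.add hneg).const_mul _).div_const _) (ae_of_all _ hpt)
    _ = n.factorial * (mgf X μ t + mgf X μ (-t)) / t ^ n := by
        rw [integral_div, integral_const_mul, integral_add hpos hneg]; rfl
    _ ≤ 2 * n.factorial * M / t ^ n := by
        gcongr ?_ / _
        nlinarith [(Nat.cast_pos.mpr n.factorial_pos : (0 : ℝ) < n.factorial)]

lemma mgf_sum_range_le_exp [IsProbabilityMeasure μ] {Y : ℕ → Ω → ℝ}
    (hmeas : ∀ i, Measurable (Y i)) (hindep : iIndepFun Y μ)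
    (hident : ∀ i, IdentDistrib (Y i) (Y 0) μ μ) (hint : Integrable (Y 0) μ) (hmean : μ[Y 0] = 0)
    (hint2 : Integrable (fun ω ↦ Y 0 ω ^ 2 * exp |Y 0 ω|) μ) (k : ℕ) {s : ℝ} (hs : |s| ≤ 1) :
    mgf (fun ω ↦ ∑ i ∈ range k, Y i ω) μ s ≤
      exp (k * s ^ 2 * μ[fun ω ↦ Y 0 ω ^ 2 * exp |Y 0 ω|]) := by
  rw [← sum_fn, hindep.mgf_sum hmeas,
    prod_congr rfl fun i _ ↦ mgf_congr_of_identDistrib _ _ (hident i) s, prod_const, card_range,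
    mul_assoc, exp_nat_mul]
  gcongr
  · exact mgf_nonneg
  · exact (mgf_le_one_add_sq_mul hint hmean hint2 hs).trans
      (by linarith [add_one_le_exp (s ^ 2 * μ[fun ω ↦ Y 0 ω ^ 2 * exp |Y 0 ω|])])

lemma integrable_exp_mul_sum_range [IsProbabilityMeasure μ] {Y : ℕ → Ω → ℝ}
    (hmeas : ∀ i, Measurable (Y i)) (hindep : iIndepFun Y μ)
    (hident : ∀ i, IdentDistrib (Y i) (Y 0) μ μ)
    (hexp : ∀ t, Integrable (fun ω ↦ exp (t * Y 0 ω)) μ) (k : ℕ) (t : ℝ) :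
    Integrable (fun ω ↦ exp (t * ∑ i ∈ range k, Y i ω)) μ := by
  simpa only [Finset.sum_apply] using hindep.integrable_exp_mul_sum hmeas (s := range k) fun i _ ↦
    ((hident i).comp (measurable_const_mul t).exp).integrable_iff.mpr (hexp t)

lemma integrable_abs_sum_range_pow [IsProbabilityMeasure μ] {Y : ℕ → Ω → ℝ}
    (hmeas : ∀ i, Measurable (Y i)) (hindep : iIndepFun Y μ)
    (hident : ∀ i, IdentDistrib (Y i) (Y 0) μ μ)
    (hexp : ∀ t, Integrable (fun ω ↦ exp (t * Y 0 ω)) μ) (k n : ℕ) :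
    Integrable (fun ω ↦ |∑ i ∈ range k, Y i ω| ^ n) μ :=
  integrable_pow_abs_of_integrable_exp_mul one_ne_zero
    (integrable_exp_mul_sum_range hmeas hindep hident hexp k 1)
    (integrable_exp_mul_sum_range hmeas hindep hident hexp k (-1)) n

lemma integral_abs_sum_range_pow_two_mul_le [IsProbabilityMeasure μ] {Y : ℕ → Ω → ℝ}
    (hmeas : ∀ i, Measurable (Y i)) (hindep : iIndepFun Y μ)
    (hident : ∀ i, IdentDistrib (Y i) (Y 0) μ μ)
    (hexp : ∀ t, Integrable (fun ω ↦ exp (t * Y 0 ω)) μ) (hmean : μ[Y 0] = 0) (k n : ℕ) :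
    ∫ ω, |∑ i ∈ range k, Y i ω| ^ (2 * n) ∂μ ≤
      2 * (2 * n).factorial * exp (μ[fun ω ↦ Y 0 ω ^ 2 * exp |Y 0 ω|]) * k ^ n := by
  set c := μ[fun ω ↦ Y 0 ω ^ 2 * exp |Y 0 ω|]
  rcases k.eq_zero_or_pos with rfl | hk
  · have : (1 : ℝ) ≤ 2 * (2 * n).factorial * exp c := by
      have := one_le_exp (integral_nonneg fun ω ↦ by positivity : 0 ≤ c)
      have : (1 : ℝ) ≤ (2 * n).factorial := by exact_mod_cast (2 * n).factorial_pos
      nlinarith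
    rcases n.eq_zero_or_pos with rfl | hn
    · simpa using this
    · simp [hn.ne']
  have hint : Integrable (Y 0) μ := by
    simpa using integrable_pow_of_integrable_exp_mul one_ne_zero (hexp 1) (hexp (-1)) 1
  have hint2 : Integrable (fun ω ↦ Y 0 ω ^ 2 * exp |Y 0 ω|) μ := by
    simpa using integrable_pow_abs_mul_exp_add_of_integrable_exp_mul (v := 0) (t := 2)
      (by simpa using hexp 2) (by simpa using hexp (-2)) zero_le_one (by norm_num) 2
  set t := (√k)⁻¹
  have ht : 0 < t := by positivity
  have ht2 : t ^ 2 = (k : ℝ)⁻¹ := by rw [inv_pow, sq_sqrt k.cast_nonneg]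
  have hmgf (s : ℝ) (hs : |s| = t) : mgf (fun ω ↦ ∑ i ∈ range k, Y i ω) μ s ≤ exp c := by
    have hs1 : |s| ≤ 1 := hs ▸ inv_le_one_of_one_le₀ (Real.one_le_sqrt.mpr (by exact_mod_cast hk))
    refine (mgf_sum_range_le_exp hmeas hindep hident hint hmean hint2 k hs1).trans_eq ?_
    rw [← sq_abs, hs, ht2, mul_inv_cancel₀ (by positivity), one_mul]
  have := integral_abs_pow_le_of_mgf_le ht
    (integrable_exp_mul_sum_range hmeas hindep hident hexp k t)
    (integrable_exp_mul_sum_range hmeas hindep hident hexp k (-t))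
    (hmgf t (abs_of_pos ht)) (hmgf (-t) (by rw [abs_neg, abs_of_pos ht])) (2 * n)
  rwa [pow_mul, ht2, inv_pow, div_inv_eq_mul] at this

lemma integral_sum_range_pow_le {S : ℕ → Ω → ℝ} {B : ℝ} {p q : ℕ} (hB : 0 ≤ B)
    (hint : ∀ k, Integrable (fun ω ↦ |S k ω| ^ (p + 1)) μ)
    (hmom : ∀ k, ∫ ω, |S k ω| ^ (p + 1) ∂μ ≤ B * k ^ q) (N : ℕ) :
    ∫ ω, (∑ k ∈ range N, |S k ω|) ^ (p + 1) ∂μ ≤ B * N ^ (p + 1 + q) := by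
  have hjensen (ω : Ω) :
      (∑ k ∈ range N, |S k ω|) ^ (p + 1) ≤ N ^ p * ∑ k ∈ range N, |S k ω| ^ (p + 1) := by
    simpa using pow_sum_le_card_mul_sum_pow (s := range N) (fun k _ ↦ abs_nonneg (S k ω)) p
  calc ∫ ω, (∑ k ∈ range N, |S k ω|) ^ (p + 1) ∂μ
      ≤ ∫ ω, N ^ p * ∑ k ∈ range N, |S k ω| ^ (p + 1) ∂μ :=
        integral_mono_of_nonneg (ae_of_all _ fun ω ↦ by positivity)
          ((integrable_finsetSum _ fun k _ ↦ hint k).const_mul _) (ae_of_all _ hjensen)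
    _ = N ^ p * ∑ k ∈ range N, ∫ ω, |S k ω| ^ (p + 1) ∂μ := by
        rw [integral_const_mul, integral_finsetSum _ fun k _ ↦ hint k]
    _ ≤ N ^ p * ∑ _k ∈ range N, B * N ^ q := by
        gcongr with k hk
        exact (hmom k).trans (by gcongr; exact (mem_range.mp hk).le)
    _ = B * N ^ (p + 1 + q) := by
        rw [sum_const, card_range, nsmul_eq_mul]
        ring

lemma integral_scaled_sum_range_pow_six_le {S : ℕ → Ω → ℝ} {B : ℝ} (hB : 0 ≤ B)
    (hint : ∀ k, Integrable (fun ω ↦ |S k ω| ^ 6) μ)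
    (hmom : ∀ k, ∫ ω, |S k ω| ^ 6 ∂μ ≤ B * k ^ 3) {m σ T : ℝ} (hm : 0 ≤ m) (hT : 0 ≤ T)
    {n : ℕ} (hn : 0 < n) :
    ∫ ω, ((m / n) * ∑ k ∈ range ⌈n * T / m⌉₊, |S k ω| / (σ * √n)) ^ 6 ∂μ ≤
      B * (m / σ) ^ 6 * (T / m + 1) ^ 9 := by
  set N := ⌈n * T / m⌉₊
  have hn' : (0 : ℝ) < n := by exact_mod_cast hn
  have hN : (N : ℝ) / n ≤ T / m + 1 := by
    rw [div_le_iff₀ hn']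
    have hceil : (N : ℝ) < n * T / m + 1 := Nat.ceil_lt_add_one (by positivity)
    have : (1 : ℝ) ≤ n := by exact_mod_cast hn
    linarith [mul_div_assoc (n : ℝ) T m]
  have hscale (ω : Ω) : ((m / n) * ∑ k ∈ range N, |S k ω| / (σ * √n)) ^ 6 =
      (m / σ) ^ 6 / n ^ 9 * (∑ k ∈ range N, |S k ω|) ^ 6 := by
    rw [← sum_div]
    have : √(n : ℝ) ^ 6 = n ^ 3 := by rw [show 6 = 2 * 3 by rfl, pow_mul, sq_sqrt hn'.le]
    field_simp
    rw [this]
    ring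
  calc ∫ ω, ((m / n) * ∑ k ∈ range N, |S k ω| / (σ * √n)) ^ 6 ∂μ
      = (m / σ) ^ 6 / n ^ 9 * ∫ ω, (∑ k ∈ range N, |S k ω|) ^ 6 ∂μ := by
        simp_rw [hscale, integral_const_mul]
    _ ≤ (m / σ) ^ 6 / n ^ 9 * (B * N ^ 9) := by
        gcongr
        exact integral_sum_range_pow_le (p := 5) hB hint hmom N
    _ = B * (m / σ) ^ 6 * (N / n) ^ 9 := by ring
    _ ≤ B * (m / σ) ^ 6 * (T / m + 1) ^ 9 := by gcongr

end

theorem stmt_13_general {Ω : Type*} [MeasurableSpace Ω] (μ : Measure Ω) [IsProbabilityMeasure μ]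
    (ξ : ℕ → Ω → ℝ) (hmeas : ∀ i, Measurable (ξ i))
    (hpos : ∀ i ω, 0 < ξ i ω)
    (hindep : iIndepFun ξ μ)
    (hident : ∀ i, IdentDistrib (ξ i) (ξ 0) μ μ)
    (hmgf : ∀ θ : ℝ, 0 < θ → Integrable (fun ω => Real.exp (θ * ξ 0 ω)) μ)
    (τ : ℕ → Ω → ℝ) (hτ : ∀ k ω, τ k ω = ∑ i ∈ Finset.range k, ξ i ω)
    (Eξ : ℝ) (hEξ : Eξ = ∫ ω, ξ 0 ω ∂μ)
    (T : ℝ) (hT : 0 < T) :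
    ∃ C : ℝ, 0 < C ∧ ∀ n : ℕ, 0 < n →
      (∫ ω, ((Eξ / n) * ∑ k ∈ Finset.range ⌈(n : ℝ) * T / Eξ⌉₊,
          |τ k ω - k * Eξ| / (variance (ξ 0) μ * Real.sqrt n)) ^ 6 ∂μ)
        ≤ C := by
  set Y : ℕ → Ω → ℝ := fun i ω ↦ ξ i ω - Eξ
  have hYmeas (i : ℕ) : Measurable (Y i) := (hmeas i).sub_const Eξ
  have hYindep : iIndepFun Y μ :=
    hindep.comp (fun _ x ↦ x - Eξ) fun _ ↦ measurable_id.sub_const Eξ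
  have hYident (i : ℕ) : IdentDistrib (Y i) (Y 0) μ μ :=
    (hident i).comp (measurable_id.sub_const Eξ)
  have hξexp : ∀ t, Integrable (fun ω ↦ exp (t * ξ 0 ω)) μ :=
    integrable_exp_mul_of_nonneg (hmeas 0).aemeasurable (ae_of_all _ fun ω ↦ (hpos 0 ω).le) hmgf
  have hYmean : μ[Y 0] = 0 := by
    have hξint : Integrable (ξ 0) μ := by
      simpa using integrable_pow_of_integrable_exp_mul one_ne_zero (hξexp 1) (hξexp (-1)) 1
    simp only [Y]
    rw [integral_sub hξint (integrable_const Eξ), integral_const, hEξ]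
    simp
  have hYexp (t : ℝ) : Integrable (fun ω ↦ exp (t * Y 0 ω)) μ :=
    integrable_exp_mul_sub_const (hξexp t) Eξ
  have hτY (k : ℕ) (ω : Ω) : τ k ω - k * Eξ = ∑ i ∈ range k, Y i ω := by
    simp [Y, hτ, sum_sub_distrib]
  simp_rw [hτY]
  exact ⟨max _ 1, lt_max_of_lt_right one_pos, fun n hn ↦
    (integral_scaled_sum_range_pow_six_le (by positivity)
      (integrable_abs_sum_range_pow hYmeas hYindep hYident hYexp · 6)
      (integral_abs_sum_range_pow_two_mul_le hYmeas hYindep hYident hYexp hYmean · 3)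
      (hEξ ▸ integral_nonneg fun ω ↦ (hpos 0 ω).le) hT.le hn).trans (le_max_left _ _)⟩

/-- Uniform sixth-moment bound for the Riemann sums of the rescaled
centered arrival-time random walk: for every `T > 0` there is `C` (depending only on
`T` and the distribution of `ξ₁`) such that for all `n`,
`E[((E[ξ₁]/n) ∑_{k=0}^{⌈nT/E[ξ₁]⌉−1} |τ_k − kE[ξ₁]|/(Var(ξ₁)√n))⁶] ≤ C`. -/
theorem stmt_13 {Ω : Type*} [MeasurableSpace Ω] (μ : Measure Ω) [IsProbabilityMeasure μ]
    (ξ : ℕ → Ω → ℝ) (hmeas : ∀ i, Measurable (ξ i))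
    (hpos : ∀ i ω, 0 < ξ i ω)
    (hindep : iIndepFun ξ μ)
    (hident : ∀ i, IdentDistrib (ξ i) (ξ 0) μ μ)
    (hmgf : ∀ θ : ℝ, 0 < θ → Integrable (fun ω => Real.exp (θ * ξ 0 ω)) μ)
    (hvar : 0 < variance (ξ 0) μ)
    (τ : ℕ → Ω → ℝ) (hτ : ∀ k ω, τ k ω = ∑ i ∈ Finset.range k, ξ i ω)
    (Eξ : ℝ) (hEξ : Eξ = ∫ ω, ξ 0 ω ∂μ)
    (T : ℝ) (hT : 0 < T) :
    ∃ C : ℝ, 0 < C ∧ ∀ n : ℕ, 0 < n →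
      (∫ ω, ((Eξ / n) * ∑ k ∈ Finset.range ⌈(n : ℝ) * T / Eξ⌉₊,
          |τ k ω - k * Eξ| / (variance (ξ 0) μ * Real.sqrt n)) ^ 6 ∂μ)
        ≤ C :=
  stmt_13_general μ ξ hmeas hpos hindep hident hmgf τ hτ Eξ hEξ T hT
end

section
/- Let (ξ_i)_{i≥1} be i.i.d. positive random variables with E[e^{θξ₁}] < ∞ for all θ > 0 and Var(ξ₁) > 0. For n ∈ ℕ set ξⁿ_k = ξ_k/n and τⁿ_k = ∑_{i=1}^k ξⁿ_i (τⁿ_0 = 0). Let f : [0,∞) → ℝ^d be continuously differentiable with ‖f'(t)‖ ≤ C₀ e^{α t} for some constants C₀, α ≥ 0. Then for every T > 0 there exists a constant C depending only on T, f and the distribution of ξ₁ such that for all n ∈ ℕ: E[ sup_{0 ≤ t ≤ T} ‖ ∑_{k=0}^{⌈nt/E[ξ₁]⌉ − 1} (n/2)(ξⁿ_{k+1})² · ( f(τⁿ_k) − f(kE[ξ₁]/n) ) ‖ ] ≤ C · n^{−1/4}. -/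
/-!
Pathwise, the supremum over `t ≤ T` is at most the sum of the norms of all `K = ⌈nT/E ξ⌉` terms.
By the mean value theorem the `k`-th term is at most `C e^{α S_K/n} ξ_k² |S_k - k E ξ| / n²`,
where `S_k = ξ_0 + ⋯ + ξ_{k-1}`, and `2ab ≤ √n a² + b²/√n` splits it into the exponential moment
`E exp(4ξ_k + (2α/n) S_K)`, which independence and the convexity bound
`E e^{cξ} ≤ exp((c/c₀) E e^{c₀ξ})` keep bounded uniformly in `n`, and `E (S_k - k E ξ)² = k Var ξ`.
The `O(n)` terms then add up to `O(n^{-1/2})`, and `n^{-1/2} ≤ n^{-1/4}`.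
-/

open MeasureTheory ProbabilityTheory Real Finset

lemma two_mul_mul_le_mul_sq_add_sq_div (a b : ℝ) {s : ℝ} (hs : 0 < s) :
    2 * (a * b) ≤ s * a ^ 2 + b ^ 2 / s := by
  have key : s * a ^ 2 + b ^ 2 / s - 2 * (a * b) = (s * a - b) ^ 2 / s := by
    field_simp; ring
  rw [← sub_nonneg, key]
  positivity

lemma ceil_mul_div_le_add_one_mul {n T m : ℝ} (hn : 1 ≤ n) (hT : 0 ≤ T) (hm : 0 < m) :
    (⌈n * T / m⌉₊ : ℝ) ≤ (T / m + 1) * n := by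
  have hceil := Nat.ceil_lt_add_one (show 0 ≤ n * T / m by positivity)
  have : n * T / m = T / m * n := by ring
  nlinarith [div_nonneg hT hm.le]

lemma sq_mul_exp_mul_le {x : ℝ} (hx : 0 ≤ x) (y z : ℝ) {s : ℝ} (hs : 0 < s) :
    2 * (x ^ 2 * exp y * |z|) ≤ s * exp (4 * x + 2 * y) + z ^ 2 / s := by
  have hx_le : x ≤ exp x := by linarith [add_one_le_exp x]
  have hsq : x ^ 2 * exp y ≤ exp (2 * x + y) := by
    rw [exp_add, show 2 * x = x + x by ring, exp_add, ← sq]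
    gcongr
  calc 2 * (x ^ 2 * exp y * |z|) ≤ 2 * (exp (2 * x + y) * |z|) := by gcongr
    _ ≤ s * exp (2 * x + y) ^ 2 + |z| ^ 2 / s := two_mul_mul_le_mul_sq_add_sq_div _ _ hs
    _ = s * exp (4 * x + 2 * y) + z ^ 2 / s := by
      rw [sq_abs, ← exp_nat_mul]; ring_nf

lemma iSup_norm_sum_range_ceil_le {E : Type*} [SeminormedAddCommGroup E] (g : ℕ → E)
    {n m T : ℝ} (hn : 0 ≤ n) (hm : 0 ≤ m) :
    ⨆ t : Set.Icc 0 T, ‖∑ k ∈ range ⌈n * t / m⌉₊, g k‖ ≤ ∑ k ∈ range ⌈n * T / m⌉₊, ‖g k‖ := by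
  refine Real.iSup_le (fun t => (norm_sum_le _ _).trans ?_) (sum_nonneg fun _ _ => norm_nonneg _)
  refine sum_le_sum_of_subset_of_nonneg (range_subset_range.mpr ?_) fun _ _ _ => norm_nonneg _
  exact Nat.ceil_le_ceil (by gcongr; exact t.2.2)

section Pathwise

variable {E : Type*} [NormedAddCommGroup E] [NormedSpace ℝ E] {f : ℝ → E} {C₀ α : ℝ}

lemma norm_sub_le_mul_exp_mul_abs (hf : Differentiable ℝ f) (hC₀ : 0 ≤ C₀) (hα : 0 ≤ α)
    (hf' : ∀ t, 0 ≤ t → ‖deriv f t‖ ≤ C₀ * exp (α * t))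
    {B x y : ℝ} (hx : x ∈ Set.Icc 0 B) (hy : y ∈ Set.Icc 0 B) :
    ‖f x - f y‖ ≤ C₀ * exp (α * B) * |x - y| := by
  have hderiv : ∀ t ∈ Set.Icc 0 B, ‖deriv f t‖ ≤ C₀ * exp (α * B) := fun t ht =>
    (hf' t ht.1).trans (by gcongr; exact ht.2)
  simpa [Real.norm_eq_abs] using
    (convex_Icc 0 B).norm_image_sub_le_of_norm_deriv_le (fun t _ => hf t) hderiv hy hx

lemma norm_smul_sub_le_of_norm_deriv_le (hf : Differentiable ℝ f) (hC₀ : 0 ≤ C₀) (hα : 0 ≤ α)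
    (hf' : ∀ t, 0 ≤ t → ‖deriv f t‖ ≤ C₀ * exp (α * t))
    {x : ℕ → ℝ} (hx : ∀ i, 0 ≤ x i) {n m L : ℝ} (hn : 0 < n) (hm : 0 ≤ m) {k K : ℕ}
    (hkK : k ≤ K) (hL : k * m / n ≤ L) :
    ‖((n / 2) * (x k / n) ^ 2) • (f ((∑ i ∈ range k, x i) / n) - f (k * m / n))‖
      ≤ C₀ * exp (α * L) / (4 * n ^ 2) * (√n * exp (4 * x k + 2 * α / n * ∑ i ∈ range K, x i)
        + ((∑ i ∈ range k, x i) - k * m) ^ 2 / √n) := by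
  set S := fun j => ∑ i ∈ range j, x i
  have hS : ∀ j, 0 ≤ S j := fun j => sum_nonneg fun i _ => hx i
  have hSkK : S k ≤ S K := sum_le_sum_of_subset_of_nonneg (range_subset_range.2 hkK)
    fun i _ _ => hx i
  have hL0 : 0 ≤ L := le_trans (by positivity) hL
  have hSk_mem : S k / n ∈ Set.Icc 0 (S K / n + L) :=
    ⟨div_nonneg (hS k) hn.le, by have := div_le_div_of_nonneg_right hSkK hn.le; linarith⟩
  have hkm_mem : k * m / n ∈ Set.Icc 0 (S K / n + L) :=
    ⟨by positivity, by have := div_nonneg (hS K) hn.le; linarith⟩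
  have hmvt := norm_sub_le_mul_exp_mul_abs hf hC₀ hα hf' hSk_mem hkm_mem
  have hamgm := sq_mul_exp_mul_le (hx k) (α / n * S K) (S k - k * m) (sqrt_pos.2 hn)
  have hC : 0 ≤ C₀ * exp (α * L) / (4 * n ^ 2) := by positivity
  calc ‖((n / 2) * (x k / n) ^ 2) • (f (S k / n) - f (k * m / n))‖
      = x k ^ 2 / (2 * n) * ‖f (S k / n) - f (k * m / n)‖ := by
        rw [norm_smul, Real.norm_eq_abs, abs_of_nonneg (by positivity)]
        field_simp
    _ ≤ x k ^ 2 / (2 * n) * (C₀ * exp (α * (S K / n + L)) * |S k / n - k * m / n|) := by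
        gcongr
    _ = C₀ * exp (α * L) / (4 * n ^ 2) * (2 * (x k ^ 2 * exp (α / n * S K) * |S k - k * m|)) := by
        rw [← sub_div, abs_div, abs_of_pos hn, mul_add, exp_add]
        field_simp
        ring
    _ ≤ C₀ * exp (α * L) / (4 * n ^ 2) * (√n * exp (4 * x k + 2 * α / n * S K)
        + (S k - k * m) ^ 2 / √n) := by
        refine mul_le_mul_of_nonneg_left (hamgm.trans_eq ?_) hC
        ring_nf

lemma iSup_norm_sum_smul_sub_le (hf : Differentiable ℝ f) (hC₀ : 0 ≤ C₀) (hα : 0 ≤ α)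
    (hf' : ∀ t, 0 ≤ t → ‖deriv f t‖ ≤ C₀ * exp (α * t))
    {x : ℕ → ℝ} (hx : ∀ i, 0 ≤ x i) {n m T : ℝ} (hn : 0 < n) (hm : 0 < m) :
    ⨆ t : Set.Icc 0 T, ‖∑ k ∈ range ⌈n * t / m⌉₊,
        ((n / 2) * (x k / n) ^ 2) • (f ((∑ i ∈ range k, x i) / n) - f (k * m / n))‖
      ≤ C₀ * exp (α * T) / (4 * n ^ 2) * ∑ k ∈ range ⌈n * T / m⌉₊,
        (√n * exp (4 * x k + 2 * α / n * ∑ i ∈ range ⌈n * T / m⌉₊, x i)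
          + ((∑ i ∈ range k, x i) - k * m) ^ 2 / √n) := by
  refine (iSup_norm_sum_range_ceil_le _ hn.le hm.le).trans ?_
  rw [mul_sum]
  refine sum_le_sum fun k hk =>
    norm_smul_sub_le_of_norm_deriv_le hf hC₀ hα hf' hx hn hm.le (mem_range.1 hk).le ?_
  have hk := Nat.lt_ceil.1 (mem_range.1 hk)
  rw [lt_div_iff₀ hm] at hk
  rw [div_le_iff₀ hn]
  linarith

end Pathwise

section IID

variable {Ω : Type*} [MeasurableSpace Ω] {μ : Measure Ω} [IsProbabilityMeasure μ]

lemma memLp_two_of_integrable_exp {X : Ω → ℝ} (hX : Measurable X) (h0 : ∀ ω, 0 ≤ X ω)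
    (hexp : Integrable (fun ω => exp (X ω)) μ) : MemLp X 2 μ := by
  have hneg : Integrable (fun ω => exp (-1 * X ω)) μ :=
    (integrable_const 1).mono' (by fun_prop) (ae_of_all _ fun ω => by simpa using h0 ω)
  rw [memLp_two_iff_integrable_sq hX.aestronglyMeasurable]
  exact integrable_pow_of_integrable_exp_mul one_ne_zero (by simpa using hexp) hneg 2

lemma mgf_le_exp_mul_mgf {X : Ω → ℝ} {c c₀ : ℝ} (hX : Integrable (fun ω => exp (c₀ * X ω)) μ)
    (hc : 0 ≤ c) (hcc₀ : c ≤ c₀) :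
    mgf X μ c ≤ exp (c / c₀ * mgf X μ c₀) := by
  rcases hc.eq_or_lt with rfl | hc_pos
  · simp
  set l := c / c₀
  have hc₀ : 0 < c₀ := hc_pos.trans_le hcc₀
  have hl : l ∈ Set.Icc 0 1 := ⟨by positivity, (div_le_one hc₀).mpr hcc₀⟩
  have hpt : ∀ x, exp (c * x) ≤ (1 - l) + l * exp (c₀ * x) := fun x => by
    have := convexOn_exp.2 (Set.mem_univ 0) (Set.mem_univ (c₀ * x)) (sub_nonneg.2 hl.2) hl.1
      (by ring)
    have hcx : l * (c₀ * x) = c * x := by simp only [l]; field_simp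
    simpa [hcx] using this
  calc mgf X μ c ≤ ∫ ω, ((1 - l) + l * exp (c₀ * X ω)) ∂μ :=
        integral_mono (integrable_exp_mul_of_nonneg_of_le hX hc hcc₀)
          ((integrable_const _).add (hX.const_mul _)) fun ω => hpt (X ω)
    _ = 1 + l * (mgf X μ c₀ - 1) := by
        rw [integral_add (integrable_const _) (hX.const_mul _), integral_const_mul]
        simp only [integral_const, probReal_univ, smul_eq_mul, one_mul, mgf]
        ring
    _ ≤ exp (l * (mgf X μ c₀ - 1)) := by linarith [add_one_le_exp (l * (mgf X μ c₀ - 1))]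
    _ ≤ exp (l * mgf X μ c₀) := by gcongr; linarith [hl.1]

variable {ξ : ℕ → Ω → ℝ}

lemma integral_exp_sum_mul_le (hmeas : ∀ i, Measurable (ξ i)) (hindep : iIndepFun ξ μ)
    (hident : ∀ i, IdentDistrib (ξ i) (ξ 0) μ μ) {c₀ : ℝ}
    (hc₀ : Integrable (fun ω => exp (c₀ * ξ 0 ω)) μ) {s : Finset ℕ} {c : ℕ → ℝ}
    (hc : ∀ i ∈ s, c i ∈ Set.Icc 0 c₀) :
    Integrable (fun ω => exp (∑ i ∈ s, c i * ξ i ω)) μ ∧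
      ∫ ω, exp (∑ i ∈ s, c i * ξ i ω) ∂μ ≤ exp ((∑ i ∈ s, c i) / c₀ * mgf (ξ 0) μ c₀) := by
  set Y : ℕ → Ω → ℝ := fun i ω => c i * ξ i ω
  have hY : iIndepFun Y μ := hindep.comp _ fun i => measurable_const_mul (c i)
  have hYmeas : ∀ i, Measurable (Y i) := fun i => (hmeas i).const_mul (c i)
  have hexp_sum : (fun ω => exp (∑ i ∈ s, c i * ξ i ω))
      = fun ω => exp (1 * (∑ i ∈ s, Y i) ω) := by
    simp [Y, Finset.sum_apply]
  have hmgfY : ∀ i, mgf (Y i) μ 1 = mgf (ξ 0) μ (c i) := fun i => by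
    rw [mgf_const_mul, mul_one, mgf_congr_identDistrib (hident i)]
  refine ⟨?_, ?_⟩
  · rw [hexp_sum]
    refine hY.integrable_exp_mul_sum hYmeas fun i hi => ?_
    simp only [one_mul, Y]
    exact ((hident i).comp (measurable_const_mul (c i)).exp).integrable_iff.mpr
      (integrable_exp_mul_of_nonneg_of_le hc₀ (hc i hi).1 (hc i hi).2)
  · calc ∫ ω, exp (∑ i ∈ s, c i * ξ i ω) ∂μ = ∏ i ∈ s, mgf (ξ 0) μ (c i) := by
          rw [hexp_sum, ← mgf, hY.mgf_sum hYmeas]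
          exact prod_congr rfl fun i _ => hmgfY i
      _ ≤ ∏ i ∈ s, exp (c i / c₀ * mgf (ξ 0) μ c₀) :=
          prod_le_prod (fun _ _ => mgf_nonneg) fun i hi =>
            mgf_le_exp_mul_mgf hc₀ (hc i hi).1 (hc i hi).2
      _ = exp ((∑ i ∈ s, c i) / c₀ * mgf (ξ 0) μ c₀) := by
          rw [← exp_sum, sum_div, sum_mul]

lemma integral_exp_mul_add_mul_sum_le (hmeas : ∀ i, Measurable (ξ i)) (hindep : iIndepFun ξ μ)
    (hident : ∀ i, IdentDistrib (ξ i) (ξ 0) μ μ) {a c c₀ : ℝ}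
    (hc₀ : Integrable (fun ω => exp (c₀ * ξ 0 ω)) μ) (ha : 0 ≤ a) (hc : 0 ≤ c) (hac : a + c ≤ c₀)
    {k K : ℕ} (hk : k ∈ range K) :
    Integrable (fun ω => exp (a * ξ k ω + c * ∑ i ∈ range K, ξ i ω)) μ ∧
      ∫ ω, exp (a * ξ k ω + c * ∑ i ∈ range K, ξ i ω) ∂μ
        ≤ exp ((a + K * c) / c₀ * mgf (ξ 0) μ c₀) := by
  set w : ℕ → ℝ := fun i => c + if i = k then a else 0
  have hw : ∀ i ∈ range K, w i ∈ Set.Icc 0 c₀ := fun i _ => by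
    simp only [w]; split_ifs <;> constructor <;> linarith
  have hsum : ∀ ω, ∑ i ∈ range K, w i * ξ i ω = a * ξ k ω + c * ∑ i ∈ range K, ξ i ω :=
    fun ω => by
      simp only [w, add_mul, ite_mul, zero_mul, sum_add_distrib, sum_ite_eq', if_pos hk, mul_sum]
      ring
  have hwsum : ∑ i ∈ range K, w i = a + K * c := by
    simp only [w, sum_add_distrib, sum_ite_eq', if_pos hk, sum_const, card_range, nsmul_eq_mul]
    ring
  simpa only [hsum, hwsum] using integral_exp_sum_mul_le hmeas hindep hident hc₀ hw

lemma integral_sq_sum_range_sub_eq (hindep : iIndepFun ξ μ)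
    (hident : ∀ i, IdentDistrib (ξ i) (ξ 0) μ μ) (hmem : MemLp (ξ 0) 2 μ) (k : ℕ) :
    ∫ ω, ((∑ i ∈ range k, ξ i ω) - k * μ[ξ 0]) ^ 2 ∂μ = k * Var[ξ 0; μ] := by
  have hmem_i : ∀ i, MemLp (ξ i) 2 μ := fun i => (hident i).memLp_iff.mpr hmem
  have hvar : Var[∑ i ∈ range k, ξ i; μ] = k * Var[ξ 0; μ] := by
    rw [IndepFun.variance_sum (fun i _ => hmem_i i) fun i _ j _ hij => hindep.indepFun hij,
      sum_congr rfl fun i _ => (hident i).variance_eq]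
    simp
  have hmean : μ[∑ i ∈ range k, ξ i] = (k : ℝ) * μ[ξ 0] := by
    rw [Finset.sum_fn, integral_finsetSum _ fun i _ => (hmem_i i).integrable one_le_two,
      sum_congr rfl fun i _ => (hident i).integral_eq]
    simp
  rw [← hvar, variance_eq_integral (memLp_finsetSum' _ fun i _ => hmem_i i).aemeasurable, hmean]
  simp [Finset.sum_apply]

lemma integral_sum_exp_add_sq_le (hmeas : ∀ i, Measurable (ξ i)) (hindep : iIndepFun ξ μ)
    (hident : ∀ i, IdentDistrib (ξ i) (ξ 0) μ μ) {a c c₀ s : ℝ}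
    (hc₀ : Integrable (fun ω => exp (c₀ * ξ 0 ω)) μ) (hmem : MemLp (ξ 0) 2 μ)
    (ha : 0 ≤ a) (hc : 0 ≤ c) (hac : a + c ≤ c₀) (hs : 0 < s) (K : ℕ) :
    Integrable (fun ω => ∑ k ∈ range K, (s * exp (a * ξ k ω + c * ∑ i ∈ range K, ξ i ω)
        + ((∑ i ∈ range k, ξ i ω) - k * μ[ξ 0]) ^ 2 / s)) μ ∧
      ∫ ω, ∑ k ∈ range K, (s * exp (a * ξ k ω + c * ∑ i ∈ range K, ξ i ω)
          + ((∑ i ∈ range k, ξ i ω) - k * μ[ξ 0]) ^ 2 / s) ∂μ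
        ≤ K * (s * exp ((a + K * c) / c₀ * mgf (ξ 0) μ c₀) + K * Var[ξ 0; μ] / s) := by
  have hexp := fun k (hk : k ∈ range K) =>
    integral_exp_mul_add_mul_sum_le hmeas hindep hident hc₀ ha hc hac hk
  have hsq_int : ∀ k : ℕ, Integrable (fun ω => ((∑ i ∈ range k, ξ i ω) - k * μ[ξ 0]) ^ 2) μ :=
    fun k => by
      have hmem_sum := memLp_finsetSum' (range k) fun i _ => (hident i).memLp_iff.mpr hmem
      simpa [Finset.sum_apply] using
        (hmem_sum.sub (memLp_const ((k : ℝ) * μ[ξ 0]))).integrable_sq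
  have hterm_int : ∀ k ∈ range K, Integrable (fun ω =>
      s * exp (a * ξ k ω + c * ∑ i ∈ range K, ξ i ω)
        + ((∑ i ∈ range k, ξ i ω) - k * μ[ξ 0]) ^ 2 / s) μ :=
    fun k hk => ((hexp k hk).1.const_mul s).add ((hsq_int k).div_const s)
  refine ⟨integrable_finsetSum _ hterm_int, ?_⟩
  rw [integral_finsetSum _ hterm_int]
  set bound := s * exp ((a + K * c) / c₀ * mgf (ξ 0) μ c₀) + K * Var[ξ 0; μ] / s
  refine (sum_le_sum (g := fun _ => bound) fun k hk => ?_).trans_eq (by simp)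
  rw [integral_add ((hexp k hk).1.const_mul s) ((hsq_int k).div_const s), integral_const_mul,
    integral_div, integral_sq_sum_range_sub_eq hindep hident hmem]
  have hkK : (k : ℝ) ≤ K := by exact_mod_cast (mem_range.1 hk).le
  have hexp_le := (hexp k hk).2
  have hV := variance_nonneg (ξ 0) μ
  simp only [bound]
  gcongr

lemma integral_sum_exp_add_sq_le_mul_sqrt (hmeas : ∀ i, Measurable (ξ i))
    (hindep : iIndepFun ξ μ) (hident : ∀ i, IdentDistrib (ξ i) (ξ 0) μ μ) {α : ℝ} (hα : 0 ≤ α)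
    (hexp : Integrable (fun ω => exp ((4 + 2 * α) * ξ 0 ω)) μ) (hmem : MemLp (ξ 0) 2 μ)
    {n κ : ℝ} (hn : 1 ≤ n) {K : ℕ} (hK : K ≤ κ * n) :
    Integrable (fun ω => ∑ k ∈ range K, (√n * exp (4 * ξ k ω + 2 * α / n * ∑ i ∈ range K, ξ i ω)
        + ((∑ i ∈ range k, ξ i ω) - k * μ[ξ 0]) ^ 2 / √n)) μ ∧
      ∫ ω, ∑ k ∈ range K, (√n * exp (4 * ξ k ω + 2 * α / n * ∑ i ∈ range K, ξ i ω)
          + ((∑ i ∈ range k, ξ i ω) - k * μ[ξ 0]) ^ 2 / √n) ∂μ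
        ≤ κ * (exp ((4 + 2 * α * κ) / (4 + 2 * α) * mgf (ξ 0) μ (4 + 2 * α))
          + κ * Var[ξ 0; μ]) * (n * √n) := by
  have hn0 : 0 < n := by linarith
  have hκ : 0 ≤ κ := nonneg_of_mul_nonneg_left ((Nat.cast_nonneg K).trans hK) hn0
  obtain ⟨hint, hle⟩ := integral_sum_exp_add_sq_le hmeas hindep hident hexp hmem
    (by norm_num : (0 : ℝ) ≤ 4) (by positivity : 0 ≤ 2 * α / n)
    (by gcongr; exact div_le_self (by positivity) hn) (sqrt_pos.2 hn0) K
  refine ⟨hint, hle.trans ?_⟩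
  have hKα : K * (2 * α / n) ≤ 2 * α * κ := by
    rw [mul_div_assoc', div_le_iff₀ hn0]; nlinarith
  have hmgf_nonneg : 0 ≤ mgf (ξ 0) μ (4 + 2 * α) := mgf_nonneg
  have hV := variance_nonneg (ξ 0) μ
  calc _ ≤ κ * n * (√n * exp ((4 + 2 * α * κ) / (4 + 2 * α) * mgf (ξ 0) μ (4 + 2 * α))
        + κ * n * Var[ξ 0; μ] / √n) := by gcongr
    _ = _ := by
        field_simp
        rw [sq_sqrt hn0.le]
        ring

end IID

theorem stmt_16_general {Ω : Type*} [MeasurableSpace Ω] (μ : Measure Ω) [IsProbabilityMeasure μ]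
    (d : ℕ)
    (ξ : ℕ → Ω → ℝ) (hmeas : ∀ i, Measurable (ξ i))
    (hpos : ∀ i ω, 0 < ξ i ω)
    (hindep : iIndepFun ξ μ)
    (hident : ∀ i, IdentDistrib (ξ i) (ξ 0) μ μ)
    (hmgf : ∀ θ : ℝ, 0 < θ → Integrable (fun ω => Real.exp (θ * ξ 0 ω)) μ)
    (τ : ℕ → ℕ → Ω → ℝ) (hτ : ∀ n k ω, τ n k ω = (∑ i ∈ Finset.range k, ξ i ω) / n)
    (Eξ : ℝ) (hEξ : Eξ = ∫ ω, ξ 0 ω ∂μ)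
    (f : ℝ → EuclideanSpace ℝ (Fin d)) (hf : ContDiff ℝ 1 f)
    (C₀ α : ℝ) (hC₀ : 0 ≤ C₀) (hα : 0 ≤ α)
    (hf' : ∀ t : ℝ, 0 ≤ t → ‖deriv f t‖ ≤ C₀ * Real.exp (α * t))
    (T : ℝ) (hT : 0 < T) :
    ∃ C : ℝ, 0 < C ∧ ∀ n : ℕ, 0 < n →
      (∫ ω, (⨆ t : Set.Icc (0 : ℝ) T,
          ‖∑ k ∈ Finset.range ⌈(n : ℝ) * t / Eξ⌉₊,
            (((n : ℝ) / 2) * (ξ k ω / n) ^ 2) •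
              (f (τ n k ω) - f ((k : ℝ) * Eξ / n))‖) ∂μ)
        ≤ C * (n : ℝ) ^ (-(1 : ℝ) / 4) := by
  subst hEξ
  have hmem : MemLp (ξ 0) 2 μ :=
    memLp_two_of_integrable_exp (hmeas 0) (fun ω => (hpos 0 ω).le) (by simpa using hmgf 1 one_pos)
  have hm : 0 < μ[ξ 0] := by
    rw [integral_pos_iff_support_of_nonneg (fun ω => (hpos 0 ω).le) (hmem.integrable one_le_two)]
    simp [Function.support, fun ω => (hpos 0 ω).ne']
  set κ := T / μ[ξ 0] + 1
  set B := κ * (exp ((4 + 2 * α * κ) / (4 + 2 * α) * mgf (ξ 0) μ (4 + 2 * α)) + κ * Var[ξ 0; μ])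
  have hB : 0 ≤ B := by have := variance_nonneg (ξ 0) μ; positivity
  refine ⟨C₀ * exp (α * T) * B / 4 + 1, by positivity, fun n hn => ?_⟩
  have hn1 : (1 : ℝ) ≤ n := by exact_mod_cast hn
  obtain ⟨hD_int, hD_le⟩ := integral_sum_exp_add_sq_le_mul_sqrt hmeas hindep hident hα
    (hmgf _ (by positivity)) hmem hn1 (ceil_mul_div_le_add_one_mul hn1 hT.le hm)
  simp only [hτ]
  refine (integral_mono_of_nonneg (ae_of_all _ fun ω => Real.iSup_nonneg fun _ => norm_nonneg _)
    (hD_int.const_mul (C₀ * exp (α * T) / (4 * n ^ 2))) (ae_of_all _ fun ω =>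
      iSup_norm_sum_smul_sub_le (hf.differentiable one_ne_zero) hC₀ hα hf'
        (fun i => (hpos i ω).le) (by linarith) hm)).trans ?_
  rw [integral_const_mul]
  have hrpow : (n : ℝ) ^ (-(1 : ℝ) / 2) = √n / n := by
    rw [sqrt_div_self, sqrt_eq_rpow, ← rpow_neg (Nat.cast_nonneg n)]; norm_num
  calc _ ≤ C₀ * exp (α * T) / (4 * n ^ 2) * (B * (n * √n)) := by gcongr
    _ = C₀ * exp (α * T) * B / 4 * (n : ℝ) ^ (-(1 : ℝ) / 2) := by rw [hrpow]; field_simp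
    _ ≤ (C₀ * exp (α * T) * B / 4 + 1) * (n : ℝ) ^ (-(1 : ℝ) / 4) :=
        mul_le_mul (by linarith) (rpow_le_rpow_of_exponent_le hn1 (by norm_num))
          (by positivity) (by positivity)

/-- Comparison of `f` at the random sampling times with `f` at the
deterministic grid: for `f ∈ C¹` with `‖f'(t)‖ ≤ C₀ e^{αt}`, there is `C` (depending
only on `T`, `f` and the distribution of `ξ₁`) with
`E[sup_{0≤t≤T} ‖∑_{k=0}^{⌈nt/E[ξ₁]⌉−1} (n/2)(ξⁿ_{k+1})²(f(τⁿ_k) − f(kE[ξ₁]/n))‖] ≤ C n^{−1/4}`.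
Here `ξ k` plays the role of the paper's `ξ_{k+1}`. -/
theorem stmt_16 {Ω : Type*} [MeasurableSpace Ω] (μ : Measure Ω) [IsProbabilityMeasure μ]
    (d : ℕ) (hd : 0 < d)
    (ξ : ℕ → Ω → ℝ) (hmeas : ∀ i, Measurable (ξ i))
    (hpos : ∀ i ω, 0 < ξ i ω)
    (hindep : iIndepFun ξ μ)
    (hident : ∀ i, IdentDistrib (ξ i) (ξ 0) μ μ)
    (hmgf : ∀ θ : ℝ, 0 < θ → Integrable (fun ω => Real.exp (θ * ξ 0 ω)) μ)
    (hvar : 0 < variance (ξ 0) μ)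
    (τ : ℕ → ℕ → Ω → ℝ) (hτ : ∀ n k ω, τ n k ω = (∑ i ∈ Finset.range k, ξ i ω) / n)
    (Eξ : ℝ) (hEξ : Eξ = ∫ ω, ξ 0 ω ∂μ)
    (f : ℝ → EuclideanSpace ℝ (Fin d)) (hf : ContDiff ℝ 1 f)
    (C₀ α : ℝ) (hC₀ : 0 ≤ C₀) (hα : 0 ≤ α)
    (hf' : ∀ t : ℝ, 0 ≤ t → ‖deriv f t‖ ≤ C₀ * Real.exp (α * t))
    (T : ℝ) (hT : 0 < T) :
    ∃ C : ℝ, 0 < C ∧ ∀ n : ℕ, 0 < n →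
      (∫ ω, (⨆ t : Set.Icc (0 : ℝ) T,
          ‖∑ k ∈ Finset.range ⌈(n : ℝ) * t / Eξ⌉₊,
            (((n : ℝ) / 2) * (ξ k ω / n) ^ 2) •
              (f (τ n k ω) - f ((k : ℝ) * Eξ / n))‖) ∂μ)
        ≤ C * (n : ℝ) ^ (-(1 : ℝ) / 4) :=
  stmt_16_general μ d ξ hmeas hpos hindep hident hmgf τ hτ Eξ hEξ f hf C₀ α hC₀ hα hf' T hT
end
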